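/- arXiv:2212.06621 — 8 statements merged into one kernel-verified Lean document; each statement's English description precedes it below -/
import Mathlib

section
/- Let r, n, i, j, u, v be positive integers with 1 ≤ i < j ≤ r ≤ n and u < v. Then the following are equivalent: (1) there exists a strictly increasing function π : ℕ → ℕ on the positive integers such that π(r) ≤ n, π(i) = u and π(j) = v (i.e., the monomial x_u x_v lies in the Inc_{r,n}-orbit of x_i x_j); (2) i ≤ u, u − i ≤ v − j, and v − j ≤ n − r (i.e., (u,v) ∈ Δ((i,j), n − r)). -/
lemma aux_shift (π : ℕ → ℕ) (hmono : ∀ a b, 1 ≤ a → a < b → π a < π b) :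
    ∀ d a, 1 ≤ a → π a + d ≤ π (a + d) := by
  intro d
  induction d with
  | zero => intro a _; simp
  | succ d ih =>
      intro a ha
      have h1 := ih a ha
      have h2 := hmono (a + d) (a + d + 1) (by omega) (by omega)
      have heq : a + (d + 1) = a + d + 1 := by omega
      rw [heq]; omega

/-- Membership of `x_u x_v` in the `Inc_{r,n}`-orbit of `x_i x_j`
is equivalent to `(u,v) ∈ Δ((i,j), n-r)`.  A function `π : ℕ → ℕ` represents an
element of `Inc` when it maps positive integers to positive integers and is
strictly increasing on positive integers.  The triangle conditions
`i ≤ u`, `u - i ≤ v - j`, `v - j ≤ n - r` are written subtraction-free. -/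
theorem stmt0 (r n i j u v : ℕ) (hi : 1 ≤ i) (hij : i < j) (hjr : j ≤ r)
    (hrn : r ≤ n) (hu : 1 ≤ u) (huv : u < v) :
    (∃ π : ℕ → ℕ, (∀ a, 1 ≤ a → 1 ≤ π a) ∧
        (∀ a b, 1 ≤ a → a < b → π a < π b) ∧
        π r ≤ n ∧ π i = u ∧ π j = v)
      ↔ (i ≤ u ∧ u + j ≤ v + i ∧ v + r ≤ n + j) := by
  constructor
  · rintro ⟨π, hpos, hmono, hrn', hiu, hjv⟩
    have h1 : π 1 + (i - 1) ≤ π i := by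
      have := aux_shift π hmono (i - 1) 1 le_rfl; simpa [Nat.add_sub_cancel' hi] using this
    have hp1 := hpos 1 le_rfl
    have hij' : π i + (j - i) ≤ π j := by
      have := aux_shift π hmono (j - i) i hi
      simpa [Nat.add_sub_cancel' hij.le] using this
    have hjr' : π j + (r - j) ≤ π r := by
      have := aux_shift π hmono (r - j) j (by omega)
      simpa [Nat.add_sub_cancel' hjr] using this
    omega
  · rintro ⟨h1, h2, h3⟩
    refine ⟨fun a => if a < j then a + (u - i) else a + (v - j), ?_, ?_, ?_, ?_, ?_⟩
    · intro a ha; dsimp only; split <;> omega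
    · intro a b _ hab
      by_cases hb : b < j <;> by_cases haj : a < j <;> simp [hb, haj] <;> omega
    · simp only [show ¬ r < j by omega, if_false]; omega
    · simp only [show i < j from hij, if_true]; omega
    · simp only [lt_irrefl, if_false]; omega
end

section
/- Let i_1, j_1, i_2, j_2 be real numbers with i_p ≥ 1, j_p ≥ 1 and i_p < j_p for p = 1, 2, and with i_1 ≤ i_2. Let n be an integer with n ≥ max{2(j_1 − i_1 + i_2 − j_2), 1}, and write Δ_p = Δ((i_p,j_p), n). Suppose (u_1, v_1) ∈ Δ_1 and (u_2, v_2) ∈ Δ_2 are points such that neither (u_1, v_2) nor (u_2, v_1) belongs to Δ_1 ∪ Δ_2. Then: (1) u_1 < v_1 and u_2 < v_2; (2) u_1 < i_2 and v_2 > j_1 + n; (3) i_1 < i_2 and j_1 < j_2, so in particular (i_1,j_1) and (i_2,j_2) are distinct. -/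
/-- `Δ((i,j), n) = {(u,v) ∈ ℝ² : 0 ≤ u - i ≤ v - j ≤ n}`. -/
def Delta (i j n : ℝ) : Set (ℝ × ℝ) :=
  {p : ℝ × ℝ | 0 ≤ p.1 - i ∧ p.1 - i ≤ p.2 - j ∧ p.2 - j ≤ n}

/-- two points at opposite corners. -/
theorem stmt1 (i1 j1 i2 j2 : ℝ) (hi1 : 1 ≤ i1) (hj1 : 1 ≤ j1)
    (hi2 : 1 ≤ i2) (hj2 : 1 ≤ j2)
    (h1 : i1 < j1) (h2 : i2 < j2) (h12 : i1 ≤ i2)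
    (n : ℤ) (hn : max (2 * (j1 - i1 + i2 - j2)) 1 ≤ (n : ℝ))
    (u1 v1 u2 v2 : ℝ)
    (hm1 : (u1, v1) ∈ Delta i1 j1 (n : ℝ))
    (hm2 : (u2, v2) ∈ Delta i2 j2 (n : ℝ))
    (ha : (u1, v2) ∉ Delta i1 j1 (n : ℝ) ∪ Delta i2 j2 (n : ℝ))
    (hb : (u2, v1) ∉ Delta i1 j1 (n : ℝ) ∪ Delta i2 j2 (n : ℝ)) :
    (u1 < v1 ∧ u2 < v2) ∧ (u1 < i2 ∧ j1 + (n : ℝ) < v2) ∧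
      (i1 < i2 ∧ j1 < j2) := by
  have hn2 : 2 * (j1 - i1 + i2 - j2) ≤ (n : ℝ) := le_trans (le_max_left _ _) hn
  have hn1 : (1 : ℝ) ≤ (n : ℝ) := le_trans (le_max_right _ _) hn
  obtain ⟨a1, a2, a3⟩ := hm1
  obtain ⟨b1, b2, b3⟩ := hm2
  simp only [Set.mem_union, Delta, Set.mem_setOf_eq, not_or, not_and_or, not_le] at ha hb
  obtain ⟨ha1, ha2⟩ := ha
  obtain ⟨hb1, hb2⟩ := hb
  -- (u2, v1) ∉ Δ1 forces v1 - j1 < u2 - i1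
  have E : v1 - j1 < u2 - i1 := by
    rcases hb1 with e | e | e
    · linarith
    · exact e
    · linarith
  -- (u2, v1) ∉ Δ2 forces one of two options
  have F : v1 - j2 < u2 - i2 ∨ (n : ℝ) < v1 - j2 := by
    rcases hb2 with f | f | f
    · linarith
    · exact Or.inl f
    · exact Or.inr f
  -- key: v2 > j1 + n
  have C2 : (n : ℝ) < v2 - j1 := by
    rcases ha1 with c | c | c
    · linarith
    · -- case v2 - j1 < u1 - i1  : derive a contradiction
      exfalso
      rcases F with f | f
      · linarith
      · rcases ha2 with d | d | d
        · linarith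
        · linarith
        · linarith
    · exact c
  -- key: u1 < i2
  have D1 : u1 < i2 := by
    rcases ha2 with d | d | d
    · linarith
    · linarith
    · linarith
  exact ⟨⟨by linarith, by linarith⟩, ⟨D1, by linarith⟩, by linarith, by linarith⟩
end

section
/- Let i_1, j_1, i_2, j_2 be real numbers with i_p ≥ 1, j_p ≥ 1 and i_p < j_p for p = 1, 2, and with i_1 ≤ i_2. Let n be an integer with n ≥ max{2(j_1 − i_1 + i_2 − j_2), j_1 + j_2 − 2i_1, 1}, and write Δ_p = Δ((i_p,j_p), n). Suppose (u_1, v_1) ∈ Δ_1 and (u_2, v_2) ∈ Δ_2 are points such that none of the four points (u_1,u_2), (v_1,v_2), (u_1,v_2), (u_2,v_1) belongs to Δ_1 ∪ Δ_2. Then v_1 < i_2 < n + j_1 < u_2; in particular, the closed intervals [u_1, v_1] and [u_2, v_2] are disjoint. -/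
set_option maxHeartbeats 4000000 in
/-- two points forming an "induced 2K₂" configuration. -/
theorem stmt2 (i1 j1 i2 j2 : ℝ) (hi1 : 1 ≤ i1) (hj1 : 1 ≤ j1)
    (hi2 : 1 ≤ i2) (hj2 : 1 ≤ j2)
    (h1 : i1 < j1) (h2 : i2 < j2) (h12 : i1 ≤ i2)
    (n : ℤ)
    (hn : max (max (2 * (j1 - i1 + i2 - j2)) (j1 + j2 - 2 * i1)) 1 ≤ (n : ℝ))
    (u1 v1 u2 v2 : ℝ)
    (hm1 : (u1, v1) ∈ Delta i1 j1 (n : ℝ))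
    (hm2 : (u2, v2) ∈ Delta i2 j2 (n : ℝ))
    (ha : (u1, u2) ∉ Delta i1 j1 (n : ℝ) ∪ Delta i2 j2 (n : ℝ))
    (hb : (v1, v2) ∉ Delta i1 j1 (n : ℝ) ∪ Delta i2 j2 (n : ℝ))
    (hc : (u1, v2) ∉ Delta i1 j1 (n : ℝ) ∪ Delta i2 j2 (n : ℝ))
    (hd : (u2, v1) ∉ Delta i1 j1 (n : ℝ) ∪ Delta i2 j2 (n : ℝ)) :
    (v1 < i2 ∧ i2 < (n : ℝ) + j1 ∧ (n : ℝ) + j1 < u2) ∧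
      Disjoint (Set.Icc u1 v1) (Set.Icc u2 v2) := by
  rw [max_le_iff, max_le_iff] at hn
  obtain ⟨⟨hN1, hN2⟩, hN3⟩ := hn
  simp only [Delta, Set.mem_setOf_eq] at hm1 hm2
  obtain ⟨hF1, hF2, hF3⟩ := hm1
  obtain ⟨hG1, hG2, hG3⟩ := hm2
  simp only [Delta, Set.mem_union, Set.mem_setOf_eq, not_or, not_and_or, not_le] at ha hb hc hd
  obtain ⟨ha1, ha2⟩ := ha
  obtain ⟨hb1, hb2⟩ := hb
  obtain ⟨hc1, hc2⟩ := hc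
  obtain ⟨hd1, hd2⟩ := hd
  have ha1' : u2 - j1 < u1 - i1 ∨ (n : ℝ) < u2 - j1 := ha1.resolve_left (by push_neg; linarith)
  have hb1' : v2 - j1 < v1 - i1 ∨ (n : ℝ) < v2 - j1 := hb1.resolve_left (by push_neg; linarith)
  have hb2' : v1 - i2 < 0 ∨ v2 - j2 < v1 - i2 := by
    rcases hb2 with h | h | h
    · exact Or.inl h
    · exact Or.inr h
    · linarith
  have hc1' : v2 - j1 < u1 - i1 ∨ (n : ℝ) < v2 - j1 := hc1.resolve_left (by push_neg; linarith)
  have hc2' : u1 - i2 < 0 ∨ v2 - j2 < u1 - i2 := by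
    rcases hc2 with h | h | h
    · exact Or.inl h
    · exact Or.inr h
    · linarith
  have hd1' : v1 - j1 < u2 - i1 := by
    rcases hd1 with h | h | h
    · linarith
    · exact h
    · linarith
  have hd2' : v1 - j2 < u2 - i2 ∨ (n : ℝ) < v1 - j2 := by
    rcases hd2 with h | h | h
    · linarith
    · exact Or.inl h
    · exact Or.inr h
  have key : v1 < i2 ∧ i2 < (n : ℝ) + j1 ∧ (n : ℝ) + j1 < u2 := by
    rcases ha1' with h₁ | h₁ <;> rcases ha2 with h₂ | h₂ | h₂ <;>
      rcases hb1' with h₃ | h₃ <;> rcases hb2' with h₄ | h₄ <;>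
      rcases hc1' with h₅ | h₅ <;> rcases hc2' with h₆ | h₆ <;>
      rcases hd2' with h₇ | h₇ <;>
      exact ⟨by linarith, by linarith, by linarith⟩
  refine ⟨key, ?_⟩
  rw [Set.disjoint_left]
  intro x hx hx'
  rw [Set.mem_Icc] at hx hx'
  have := key.1
  linarith
end

section
/- Let i_1, j_1, i_2, j_2 be real numbers with i_p ≥ 1, j_p ≥ 1 and i_p < j_p for p = 1, 2, and with i_1 ≤ i_2. Let n be an integer with n ≥ max{2(j_1 − i_1 + i_2 − j_2), j_1 + j_2 − 2i_1, 1}, and write Δ_p = Δ((i_p,j_p), n). Suppose (u_1, v_1) ∈ Δ_1 and (u_2, v_2) ∈ Δ_2 are points satisfying v_1 < i_2 < n + j_1 < u_2. Then none of the eight points (u_1,u_2), (u_2,u_1), (v_1,v_2), (v_2,v_1), (u_1,v_2), (v_2,u_1), (u_2,v_1), (v_1,u_2) belongs to Δ_1 ∪ Δ_2. -/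
/-- converse direction of the 2K₂ lemma. -/
theorem stmt3 (i1 j1 i2 j2 : ℝ) (hi1 : 1 ≤ i1) (hj1 : 1 ≤ j1)
    (hi2 : 1 ≤ i2) (hj2 : 1 ≤ j2)
    (h1 : i1 < j1) (h2 : i2 < j2) (h12 : i1 ≤ i2)
    (n : ℤ)
    (hn : max (max (2 * (j1 - i1 + i2 - j2)) (j1 + j2 - 2 * i1)) 1 ≤ (n : ℝ))
    (u1 v1 u2 v2 : ℝ)
    (hm1 : (u1, v1) ∈ Delta i1 j1 (n : ℝ))
    (hm2 : (u2, v2) ∈ Delta i2 j2 (n : ℝ))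
    (hv1 : v1 < i2) (hi2n : i2 < (n : ℝ) + j1) (hu2 : (n : ℝ) + j1 < u2) :
    (u1, u2) ∉ Delta i1 j1 (n : ℝ) ∪ Delta i2 j2 (n : ℝ) ∧
    (u2, u1) ∉ Delta i1 j1 (n : ℝ) ∪ Delta i2 j2 (n : ℝ) ∧
    (v1, v2) ∉ Delta i1 j1 (n : ℝ) ∪ Delta i2 j2 (n : ℝ) ∧
    (v2, v1) ∉ Delta i1 j1 (n : ℝ) ∪ Delta i2 j2 (n : ℝ) ∧
    (u1, v2) ∉ Delta i1 j1 (n : ℝ) ∪ Delta i2 j2 (n : ℝ) ∧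
    (v2, u1) ∉ Delta i1 j1 (n : ℝ) ∪ Delta i2 j2 (n : ℝ) ∧
    (u2, v1) ∉ Delta i1 j1 (n : ℝ) ∪ Delta i2 j2 (n : ℝ) ∧
    (v1, u2) ∉ Delta i1 j1 (n : ℝ) ∪ Delta i2 j2 (n : ℝ) := by
  obtain ⟨a1, a2, a3⟩ := hm1
  obtain ⟨b1, b2, b3⟩ := hm2
  refine ⟨?_, ?_, ?_, ?_, ?_, ?_, ?_, ?_⟩ <;>
    rintro (⟨h1', h2', h3'⟩ | ⟨h1', h2', h3'⟩) <;> linarith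
end

section
/- Let i_p, j_p (p = 1, 2, 3) be real numbers ≥ 1 with i_p < j_p for each p and i_1 ≤ i_2 ≤ i_3. Set N = max{2(j_1−i_1+i_2−j_2), 2(j_1−i_1+i_3−j_3), 2(j_2−i_2+i_3−j_3), j_1+j_2−2i_1, j_1+j_3−2i_1, j_2+j_3−2i_2, 1} and M = 2·max{j_1, j_2, j_3}. Then N ≤ M; moreover, for every integer n ≥ M and every choice of points (u_p, v_p) ∈ Δ((i_p,j_p), n) for p = 1, 2, 3, at least one of the twelve points (u_i,u_j) and (v_i,v_j) for 1 ≤ i < j ≤ 3, and (u_s,v_t) for 1 ≤ s, t ≤ 3 with s ≠ t, belongs to the union Δ((i_1,j_1), n) ∪ Δ((i_2,j_2), n) ∪ Δ((i_3,j_3), n). -/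
lemma mem_Delta (i j n x y : ℝ) (h1 : 0 ≤ x - i) (h2 : x - i ≤ y - j) (h3 : y - j ≤ n) :
    (x, y) ∈ Delta i j n := ⟨h1, h2, h3⟩

/-- no induced 3K₂ configuration among three triangles. -/
theorem stmt4 (i1 j1 i2 j2 i3 j3 : ℝ)
    (hi1 : 1 ≤ i1) (hj1 : 1 ≤ j1) (hi2 : 1 ≤ i2) (hj2 : 1 ≤ j2)
    (hi3 : 1 ≤ i3) (hj3 : 1 ≤ j3)
    (h1 : i1 < j1) (h2 : i2 < j2) (h3 : i3 < j3)
    (h12 : i1 ≤ i2) (h23 : i2 ≤ i3) :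
    max (max (max (2 * (j1 - i1 + i2 - j2)) (2 * (j1 - i1 + i3 - j3)))
          (max (2 * (j2 - i2 + i3 - j3)) (j1 + j2 - 2 * i1)))
        (max (max (j1 + j3 - 2 * i1) (j2 + j3 - 2 * i2)) 1)
      ≤ 2 * max (max j1 j2) j3 ∧
    ∀ n : ℤ, 2 * max (max j1 j2) j3 ≤ (n : ℝ) →
      ∀ u1 v1 u2 v2 u3 v3 : ℝ,
        (u1, v1) ∈ Delta i1 j1 (n : ℝ) →
        (u2, v2) ∈ Delta i2 j2 (n : ℝ) →
        (u3, v3) ∈ Delta i3 j3 (n : ℝ) →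
        ∃ p ∈ [(u1, u2), (u1, u3), (u2, u3), (v1, v2), (v1, v3), (v2, v3),
               (u1, v2), (u1, v3), (u2, v1), (u2, v3), (u3, v1), (u3, v2)],
          p ∈ Delta i1 j1 (n : ℝ) ∪ Delta i2 j2 (n : ℝ) ∪ Delta i3 j3 (n : ℝ) := by
  have hJ1 : j1 ≤ max (max j1 j2) j3 := le_max_of_le_left (le_max_left _ _)
  have hJ2 : j2 ≤ max (max j1 j2) j3 := le_max_of_le_left (le_max_right _ _)
  have hJ3 : j3 ≤ max (max j1 j2) j3 := le_max_right _ _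
  constructor
  · repeat' apply max_le
    all_goals linarith
  · intro n hn u1 v1 u2 v2 u3 v3 hm1 hm2 hm3
    obtain ⟨a1, b1, c1⟩ := hm1
    obtain ⟨a2, b2, c2⟩ := hm2
    obtain ⟨a3, b3, c3⟩ := hm3
    simp only at a1 b1 c1 a2 b2 c2 a3 b3 c3
    rcases le_total u2 u1 with h | h12u
    · -- (u2, v1) ∈ Δ1
      exact ⟨(u2, v1), by simp, Set.mem_union_left _ (Set.mem_union_left _
        (mem_Delta _ _ _ _ _ (by linarith) (by linarith) (by linarith)))⟩
    rcases le_total u3 u2 with h | h23u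
    · -- (u3, v2) ∈ Δ2
      exact ⟨(u3, v2), by simp, Set.mem_union_left _ (Set.mem_union_right _
        (mem_Delta _ _ _ _ _ (by linarith) (by linarith) (by linarith)))⟩
    rcases le_total i2 u1 with h | hu1i2
    · -- (u1, v2) ∈ Δ2
      exact ⟨(u1, v2), by simp, Set.mem_union_left _ (Set.mem_union_right _
        (mem_Delta _ _ _ _ _ (by linarith) (by linarith) (by linarith)))⟩
    rcases le_total i3 u2 with h | hu2i3
    · -- (u2, v3) ∈ Δ3
      exact ⟨(u2, v3), by simp, Set.mem_union_right _
        (mem_Delta _ _ _ _ _ (by linarith) (by linarith) (by linarith))⟩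
    rcases le_total (u2 + (j1 - i1)) v1 with h | hT5
    · -- (u2, v1) ∈ Δ1
      exact ⟨(u2, v1), by simp, Set.mem_union_left _ (Set.mem_union_left _
        (mem_Delta _ _ _ _ _ (by linarith) (by linarith) (by linarith)))⟩
    rcases le_total (u2 + (j2 - i2)) v1 with h | hT6
    · -- (u2, v1) ∈ Δ2  (v1 < 2J ≤ n so top bound fine)
      exact ⟨(u2, v1), by simp, Set.mem_union_left _ (Set.mem_union_right _
        (mem_Delta _ _ _ _ _ (by linarith) (by linarith) (by linarith)))⟩
    rcases le_total (u3 + (j3 - i3)) v1 with h | hT7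
    · -- (u3, v1) ∈ Δ3
      exact ⟨(u3, v1), by simp, Set.mem_union_right _
        (mem_Delta _ _ _ _ _ (by linarith) (by linarith) (by linarith))⟩
    rcases le_total v2 (j1 + (n : ℝ)) with h | hT8
    · -- (u1, v2) ∈ Δ1  (v1 ≤ v2 via hT6 and b2)
      exact ⟨(u1, v2), by simp, Set.mem_union_left _ (Set.mem_union_left _
        (mem_Delta _ _ _ _ _ (by linarith) (by linarith) (by linarith)))⟩
    rcases le_total (u3 + (j2 - i2)) v2 with h | hT9
    · -- (u3, v2) ∈ Δ2
      exact ⟨(u3, v2), by simp, Set.mem_union_left _ (Set.mem_union_right _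
        (mem_Delta _ _ _ _ _ (by linarith) (by linarith) (by linarith)))⟩
    rcases le_total v2 v3 with hAB | hAB
    · -- CASE A : v2 ≤ v3
      rcases le_total v3 (j2 + (n : ℝ)) with h | hT10
      · -- (u2, v3) ∈ Δ2 : u2 + (j2-i2) < 2J ≤ n < j1 + n < v2 ≤ v3
        exact ⟨(u2, v3), by simp, Set.mem_union_left _ (Set.mem_union_right _
          (mem_Delta _ _ _ _ _ (by linarith) (by linarith) (by linarith)))⟩
      rcases le_total (v2 + (j3 - i3)) v3 with h | hT11
      · -- (v2, v3) ∈ Δ3 : v2 > j1 + n ≥ 1 + 2J > i3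
        exact ⟨(v2, v3), by simp, Set.mem_union_right _
          (mem_Delta _ _ _ _ _ (by linarith) (by linarith) (by linarith))⟩
      rcases le_total (u1 + (j1 - i1)) u2 with h | hT12
      · -- (u1, u2) ∈ Δ1 : u2 ≤ i3 < J ≤ n
        exact ⟨(u1, u2), by simp, Set.mem_union_left _ (Set.mem_union_left _
          (mem_Delta _ _ _ _ _ (by linarith) (by linarith) (by linarith)))⟩
      · -- (u2, u3) ∈ Δ2
        exact ⟨(u2, u3), by simp, Set.mem_union_left _ (Set.mem_union_right _
          (mem_Delta _ _ _ _ _ (by linarith) (by linarith) (by linarith)))⟩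
    · -- CASE B : v3 ≤ v2
      rcases le_total v2 (j3 + (n : ℝ)) with h | hT14
      · -- (u3, v2) ∈ Δ3
        exact ⟨(u3, v2), by simp, Set.mem_union_right _
          (mem_Delta _ _ _ _ _ (by linarith) (by linarith) (by linarith))⟩
      · -- (u2, v3) ∈ Δ2
        exact ⟨(u2, v3), by simp, Set.mem_union_left _ (Set.mem_union_right _
          (mem_Delta _ _ _ _ _ (by linarith) (by linarith) (by linarith)))⟩
end

section
/- With G_n as in the context: for every integer n ≥ 3r, the graph G_n contains no induced 3K_2; that is, the induced matching number of G_n is at most 2. -/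
/-- Adjacency in the graph `G_n` of the chain: two distinct vertices `u, v` are
adjacent iff, writing the pair in increasing order, there is `(i,j) ∈ E` with
`i ≤ u`, `u - i ≤ v - j` and `v - j ≤ n - r`. -/
def adjGraph (r n : ℤ) (E : Set (ℤ × ℤ)) (u v : ℤ) : Prop :=
  (u < v ∧ ∃ e ∈ E, e.1 ≤ u ∧ u - e.1 ≤ v - e.2 ∧ v - e.2 ≤ n - r) ∨
  (v < u ∧ ∃ e ∈ E, e.1 ≤ v ∧ v - e.1 ≤ u - e.2 ∧ u - e.2 ≤ n - r)

/-- The graph with adjacency relation `A` contains an induced `kK₂`: `2k`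
pairwise distinct vertices `u 0, v 0, …, u (k-1), v (k-1)` such that
`u t` is adjacent to `v t` for each `t < k` and there are no other
adjacencies among these `2k` vertices. -/
def HasInducedKK2 (A : ℤ → ℤ → Prop) (k : ℕ) : Prop :=
  ∃ u v : ℕ → ℤ,
    (∀ s, s < k → ∀ t, t < k → (s ≠ t → u s ≠ u t ∧ v s ≠ v t) ∧ u s ≠ v t) ∧
    (∀ t, t < k → A (u t) (v t)) ∧
    (∀ s, s < k → ∀ t, t < k → s ≠ t →
      ¬ A (u s) (u t) ∧ ¬ A (u s) (v t) ∧ ¬ A (v s) (v t))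

/-- The induced matching number. -/
noncomputable def indmatch (A : ℤ → ℤ → Prop) : ℕ :=
  sSup {k : ℕ | HasInducedKK2 A k}

private lemma adj_symm {r n : ℤ} {E : Set (ℤ × ℤ)} {x y : ℤ}
    (h : adjGraph r n E x y) : adjGraph r n E y x := h.elim Or.inr Or.inl

/-- The arithmetic core: three edges `(a t, b t)` with witnesses `(I t, J t)`,
sorted so that `a x < a y < a z`, and all cross non-adjacency constraints,
give a contradiction when `n ≥ 3r`. -/
private lemma sortedCore (r n : ℤ) (hn : 3 * r ≤ n)
    (a b I J : ℕ → ℤ)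
    (hED : ∀ t, t < 3 → 1 ≤ I t ∧ I t < J t ∧ J t ≤ r ∧ I t ≤ a t ∧
      a t - I t ≤ b t - J t ∧ b t - J t ≤ n - r)
    (hNAB : ∀ s t w, s < 3 → t < 3 → w < 3 → s ≠ t →
      (¬(a s < a t ∧ I w ≤ a s ∧ a s - I w ≤ a t - J w ∧ a t - J w ≤ n - r)) ∧
      (¬(b s < b t ∧ I w ≤ b s ∧ b s - I w ≤ b t - J w ∧ b t - J w ≤ n - r)) ∧
      (¬(a s < b t ∧ I w ≤ a s ∧ a s - I w ≤ b t - J w ∧ b t - J w ≤ n - r)))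
    (hbne : ∀ s t, s < 3 → t < 3 → s ≠ t → b s ≠ b t)
    (x y z : ℕ) (hx : x < 3) (hy : y < 3) (hz : z < 3)
    (hxy : x ≠ y) (hxz : x ≠ z) (hyz : y ≠ z)
    (haxy : a x < a y) (hayz : a y < a z) : False := by
  obtain ⟨hIx, hIJx, hJx, hIax, hMx, hNx⟩ := hED x hx
  obtain ⟨hIy, hIJy, hJy, hIay, hMy, hNy⟩ := hED y hy
  obtain ⟨hIz, hIJz, hJz, hIaz, hMz, hNz⟩ := hED z hz
  -- the two smaller left endpoints are below the other witnesses' left parts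
  have f1 : a x < I y := by
    have h := (hNAB x y y hx hy hy hxy).2.2; omega
  have f2 : a y < I z := by
    have h := (hNAB y z z hy hz hz hyz).2.2; omega
  have f3 : a x < I z := by
    have h := (hNAB x z z hx hz hz hxz).2.2; omega
  rcases (hbne x y hx hy hxy).lt_or_gt with hbxy | hbxy <;>
    rcases (hbne x z hx hz hxz).lt_or_gt with hbxz | hbxz <;>
      rcases (hbne y z hy hz hyz).lt_or_gt with hbyz | hbyz
  -- case bx < by < bz : fully aligned
  · have n1 := (hNAB x y x hx hy hx hxy).2.2
    have n2 := (hNAB x y x hx hy hx hxy).1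
    have n3 := (hNAB y x x hy hx hx (Ne.symm hxy)).2.2
    have n4 := (hNAB x y y hx hy hy hxy).2.1
    omega
  -- case bx < bz < by : b-max is y
  · have n1 := (hNAB x z x hx hz hx hxz).2.2
    have n2 := (hNAB y z y hy hz hy hyz).2.2
    omega
  -- impossible order
  · omega
  -- case bz < bx < by : b-max is y
  · have n1 := (hNAB z x z hz hx hz (Ne.symm hxz)).2.2
    have n2 := (hNAB y x y hy hx hy (Ne.symm hxy)).2.2
    omega
  -- case by < bx < bz : the "twisted" case
  · have n1 := (hNAB y x y hy hx hy (Ne.symm hxy)).2.2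
    have n2 := (hNAB x y x hx hy hx hxy).2.2
    have n3 := (hNAB y z y hy hz hy hyz).1
    have n4 := (hNAB y z x hy hz hx hyz).1
    have n5 := (hNAB z x z hz hx hz (Ne.symm hxz)).2.2
    have n6 := (hNAB y x x hy hx hx (Ne.symm hxy)).2.1
    omega
  -- impossible order
  · omega
  -- case by < bz < bx : b-max is x
  · have n1 := (hNAB y z y hy hz hy hyz).2.2
    have n2 := (hNAB x z x hx hz hx hxz).2.2
    omega
  -- case bz < by < bx : b-max is x
  · have n1 := (hNAB z y z hz hy hz (Ne.symm hyz)).2.2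
    have n2 := (hNAB x y x hx hy hx hxy).2.2
    omega

/-- for `n ≥ 3r`, `G_n` has no induced `3K₂`; that is,
`indmatch (G_n) ≤ 2`. -/
theorem stmt5 (r : ℤ) (hr : 1 ≤ r) (E : Set (ℤ × ℤ)) (hE : E.Nonempty)
    (hEr : ∀ e ∈ E, 1 ≤ e.1 ∧ e.1 < e.2 ∧ e.2 ≤ r)
    (n : ℤ) (hn : 3 * r ≤ n) :
    ¬ HasInducedKK2 (adjGraph r n E) 3 ∧ indmatch (adjGraph r n E) ≤ 2 := by
  have key : ¬ HasInducedKK2 (adjGraph r n E) 3 := by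
    rintro ⟨u, v, hdist, hadj, hnon⟩
    have hex : ∀ t : ℕ, ∃ ab : ℤ × ℤ, ∃ w : ℤ × ℤ, t < 3 →
        w ∈ E ∧ (ab = (u t, v t) ∨ ab = (v t, u t)) ∧
        w.1 ≤ ab.1 ∧ ab.1 - w.1 ≤ ab.2 - w.2 ∧ ab.2 - w.2 ≤ n - r := by
      intro t
      by_cases ht : t < 3
      · rcases hadj t ht with ⟨hlt, e, he, h1, h2, h3⟩ | ⟨hlt, e, he, h1, h2, h3⟩
        · exact ⟨(u t, v t), e, fun _ => ⟨he, Or.inl rfl, h1, h2, h3⟩⟩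
        · exact ⟨(v t, u t), e, fun _ => ⟨he, Or.inr rfl, h1, h2, h3⟩⟩
      · exact ⟨(0, 1), (1, 2), fun h => absurd h ht⟩
    choose ab w hfac using hex
    have horient : ∀ t, t < 3 →
        ((ab t).1 = u t ∧ (ab t).2 = v t) ∨ ((ab t).1 = v t ∧ (ab t).2 = u t) := by
      intro t ht
      rcases (hfac t ht).2.1 with h | h
      · exact Or.inl ⟨by rw [h], by rw [h]⟩
      · exact Or.inr ⟨by rw [h], by rw [h]⟩
    have hsym : ∀ {p q : ℤ}, ¬ adjGraph r n E p q → ¬ adjGraph r n E q p :=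
      fun h hpq => h (adj_symm hpq)
    have hnadj : ∀ s t, s < 3 → t < 3 → s ≠ t →
        ¬ adjGraph r n E ((ab s).1) ((ab t).1) ∧
        ¬ adjGraph r n E ((ab s).2) ((ab t).2) ∧
        ¬ adjGraph r n E ((ab s).1) ((ab t).2) := by
      intro s t hs ht hst
      have hNst := hnon s hs t ht hst
      have hNts := hnon t ht s hs (Ne.symm hst)
      rcases horient s hs with ⟨e1, e2⟩ | ⟨e1, e2⟩ <;>
        rcases horient t ht with ⟨g1, g2⟩ | ⟨g1, g2⟩ <;> rw [e1, e2, g1, g2]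
      · exact ⟨hNst.1, hNst.2.2, hNst.2.1⟩
      · exact ⟨hNst.2.1, hsym hNts.2.1, hNst.1⟩
      · exact ⟨hsym hNts.2.1, hNst.2.1, hNst.2.2⟩
      · exact ⟨hNst.2.2, hNst.1, hsym hNts.2.1⟩
    have hdd : ∀ s t, s < 3 → t < 3 → s ≠ t →
        (ab s).1 ≠ (ab t).1 ∧ (ab s).2 ≠ (ab t).2 := by
      intro s t hs ht hst
      have h1 := hdist s hs t ht
      have h2 := h1.1 hst
      have h3 := hdist t ht s hs
      rcases horient s hs with ⟨e1, e2⟩ | ⟨e1, e2⟩ <;>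
        rcases horient t ht with ⟨g1, g2⟩ | ⟨g1, g2⟩ <;> rw [e1, e2, g1, g2]
      · exact ⟨h2.1, h2.2⟩
      · exact ⟨h1.2, Ne.symm h3.2⟩
      · exact ⟨Ne.symm h3.2, h1.2⟩
      · exact ⟨h2.2, h2.1⟩
    have hED : ∀ t, t < 3 → 1 ≤ (w t).1 ∧ (w t).1 < (w t).2 ∧ (w t).2 ≤ r ∧
        (w t).1 ≤ (ab t).1 ∧ (ab t).1 - (w t).1 ≤ (ab t).2 - (w t).2 ∧
        (ab t).2 - (w t).2 ≤ n - r := by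
      intro t ht
      obtain ⟨hmem, _, h1, h2, h3⟩ := hfac t ht
      obtain ⟨q1, q2, q3⟩ := hEr (w t) hmem
      exact ⟨q1, q2, q3, h1, h2, h3⟩
    have hNAB : ∀ s t w', s < 3 → t < 3 → w' < 3 → s ≠ t →
        (¬((ab s).1 < (ab t).1 ∧ (w w').1 ≤ (ab s).1 ∧
          (ab s).1 - (w w').1 ≤ (ab t).1 - (w w').2 ∧ (ab t).1 - (w w').2 ≤ n - r)) ∧
        (¬((ab s).2 < (ab t).2 ∧ (w w').1 ≤ (ab s).2 ∧
          (ab s).2 - (w w').1 ≤ (ab t).2 - (w w').2 ∧ (ab t).2 - (w w').2 ≤ n - r)) ∧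
        (¬((ab s).1 < (ab t).2 ∧ (w w').1 ≤ (ab s).1 ∧
          (ab s).1 - (w w').1 ≤ (ab t).2 - (w w').2 ∧ (ab t).2 - (w w').2 ≤ n - r)) := by
      intro s t w' hs ht hw' hst
      have hmem := (hfac w' hw').1
      obtain ⟨k1, k2, k3⟩ := hnadj s t hs ht hst
      refine ⟨fun ⟨q0, q1, q2, q3⟩ => k1 ?_, fun ⟨q0, q1, q2, q3⟩ => k2 ?_,
        fun ⟨q0, q1, q2, q3⟩ => k3 ?_⟩ <;>
        exact Or.inl ⟨q0, w w', hmem, q1, q2, q3⟩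
    have d01 := hdd 0 1 (by norm_num) (by norm_num) (by norm_num)
    have d02 := hdd 0 2 (by norm_num) (by norm_num) (by norm_num)
    have d12 := hdd 1 2 (by norm_num) (by norm_num) (by norm_num)
    have hbne : ∀ s t, s < 3 → t < 3 → s ≠ t → (ab s).2 ≠ (ab t).2 :=
      fun s t hs ht hst => (hdd s t hs ht hst).2
    have core := sortedCore r n hn (fun t => (ab t).1) (fun t => (ab t).2)
      (fun t => (w t).1) (fun t => (w t).2) hED hNAB hbne
    rcases d01.1.lt_or_gt with h01 | h01 <;>
      rcases d02.1.lt_or_gt with h02 | h02 <;>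
        rcases d12.1.lt_or_gt with h12 | h12
    · exact core 0 1 2 (by norm_num) (by norm_num) (by norm_num)
        (by norm_num) (by norm_num) (by norm_num) h01 h12
    · exact core 0 2 1 (by norm_num) (by norm_num) (by norm_num)
        (by norm_num) (by norm_num) (by norm_num) h02 h12
    · omega
    · exact core 2 0 1 (by norm_num) (by norm_num) (by norm_num)
        (by norm_num) (by norm_num) (by norm_num) h02 h01
    · exact core 1 0 2 (by norm_num) (by norm_num) (by norm_num)
        (by norm_num) (by norm_num) (by norm_num) h01 h02
    · omega
    · exact core 1 2 0 (by norm_num) (by norm_num) (by norm_num)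
        (by norm_num) (by norm_num) (by norm_num) h12 h02
    · exact core 2 1 0 (by norm_num) (by norm_num) (by norm_num)
        (by norm_num) (by norm_num) (by norm_num) h12 h01
  refine ⟨key, ?_⟩
  have upper : ∀ k ∈ {k : ℕ | HasInducedKK2 (adjGraph r n E) k}, k ≤ 2 := by
    intro k hk
    by_contra hk2
    push_neg at hk2
    obtain ⟨u, v, h1, h2, h3⟩ := hk
    exact key ⟨u, v,
      fun s hs t ht => h1 s (by omega) t (by omega),
      fun t ht => h2 t (by omega),
      fun s hs t ht hst => h3 s (by omega) t (by omega) hst⟩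
  exact csSup_le' upper
end

section
/- With G_n as in the context: let m ≥ 5 be an integer. For every integer n ≥ m·r, the graph G_n contains no induced anticycle of length m (equivalently, the complement G_n^c has no induced cycle C_m). In particular, for every n ≥ 5r, G_n^c has no induced cycle of length m for any integer m with 5 ≤ m ≤ n/r. -/
set_option maxHeartbeats 1000000


/-- `a 0, a 1, …, a (m-1)` is an induced anticycle of length `m` (in this
cyclic order) in the graph with adjacency relation `A`: the vertices are
pairwise distinct, cyclically consecutive vertices are non-adjacent, and all
other pairs are adjacent. -/
def IsInducedAnticycle (A : ℤ → ℤ → Prop) (m : ℕ) (a : ℕ → ℤ) : Prop :=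
  (∀ s, s < m → ∀ t, t < m → s ≠ t → a s ≠ a t) ∧
  (∀ t, t < m → ¬ A (a t) (a ((t + 1) % m))) ∧
  (∀ s, s < m → ∀ t, t < m → s ≠ t → (s + 1) % m ≠ t → (t + 1) % m ≠ s →
    A (a s) (a t))

namespace S7

/-- Sorted adjacency predicate: `u` adjacent to `v` assuming `u < v`. -/
def Pred (r n : ℤ) (E : Set (ℤ × ℤ)) (u v : ℤ) : Prop :=
  ∃ e ∈ E, e.1 ≤ u ∧ u - e.1 ≤ v - e.2 ∧ v - e.2 ≤ n - r

/-- A configuration: an induced anticycle presented as a periodic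
function `c : ℤ → ℤ`. -/
structure Cfg : Type where
  r : ℤ
  n : ℤ
  m : ℕ
  E : Set (ℤ × ℤ)
  c : ℤ → ℤ
  hE : E.Nonempty
  hEr : ∀ e ∈ E, 1 ≤ e.1 ∧ e.1 < e.2 ∧ e.2 ≤ r
  hm : 5 ≤ m
  hn : (m : ℤ) * r ≤ n
  hcong : ∀ s t : ℤ, s % (m : ℤ) = t % (m : ℤ) → c s = c t
  hdist : ∀ s t : ℤ, c s = c t → s % (m : ℤ) = t % (m : ℤ)
  hnonlt : ∀ t : ℤ, c t < c (t + 1) → ¬ Pred r n E (c t) (c (t + 1))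
  hnongt : ∀ t : ℤ, c (t + 1) < c t → ¬ Pred r n E (c (t + 1)) (c t)
  hadj : ∀ s t : ℤ, s % (m : ℤ) ≠ t % (m : ℤ) → (s + 1) % (m : ℤ) ≠ t % (m : ℤ) →
      (t + 1) % (m : ℤ) ≠ s % (m : ℤ) → c s < c t → Pred r n E (c s) (c t)

namespace Cfg

variable (C : Cfg)

/-- An edge (at position `q`, between `c q` and `c (q+1)`) is blocked. -/
def Blocked (q : ℤ) : Prop :=
  ∀ e ∈ C.E, min (C.c q) (C.c (q + 1)) < e.1 ∨ C.n - C.r + e.2 < max (C.c q) (C.c (q + 1))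

lemma hm' : (5 : ℤ) ≤ (C.m : ℤ) := by exact_mod_cast C.hm

lemma hr2 : 2 ≤ C.r := by
  obtain ⟨e, he⟩ := C.hE
  obtain ⟨h1, h2, h3⟩ := C.hEr e he
  omega

lemma band : ((C.m : ℤ) - 2) * (C.r - 2) < C.n - 2 * C.r + 5 := by
  have h1 := C.hn
  have h2 := C.hm'
  have h3 := C.hr2
  nlinarith

lemma nr3 : C.r - 2 < C.n - C.r + 3 := by
  have h1 := C.hn
  have h2 := C.hm'
  have h3 := C.hr2
  nlinarith

/-- Two integers with small nonzero difference are incongruent mod m. -/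
lemma mod_ne {x y : ℤ} (h0 : x ≠ y) (h1 : -(C.m : ℤ) < y - x) (h2 : y - x < (C.m : ℤ)) :
    x % (C.m : ℤ) ≠ y % (C.m : ℤ) := by
  intro h
  have hd : (C.m : ℤ) ∣ (y - x) := by
    have := Int.emod_eq_emod_iff_emod_sub_eq_zero.mp h.symm
    exact Int.dvd_of_emod_eq_zero this
  have hm5 := C.hm'
  rcases hd with ⟨k, hk⟩
  have hk0 : k ≠ 0 := by rintro rfl; simp at hk; omega
  rcases lt_or_gt_of_ne hk0 with hneg | hpos
  · nlinarith
  · nlinarith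

lemma val_ne {x y : ℤ} (h0 : x ≠ y) (h1 : -(C.m : ℤ) < y - x) (h2 : y - x < (C.m : ℤ)) :
    C.c x ≠ C.c y := fun h => C.mod_ne h0 h1 h2 (C.hdist x y h)


/-- convenient: value inequality from small positional difference -/
lemma val_ne' {x y : ℤ} (h0 : x ≠ y) (h1 : -(C.m : ℤ) < y - x) (h2 : y - x < (C.m : ℤ)) :
    C.c x ≠ C.c y := C.val_ne h0 h1 h2

/-- Step 0, left: every vertex has an edge with `i ≤ c t`. -/
lemma step0L (t : ℤ) : ∃ e ∈ C.E, e.1 ≤ C.c t := by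
  have hm5 := C.hm'
  have hne : (t : ℤ) % C.m ≠ (t + 2) % C.m := C.mod_ne (by omega) (by omega) (by omega)
  rcases lt_trichotomy (C.c t) (C.c (t + 2)) with hlt | heq | hgt
  · obtain ⟨e, he, h1, h2, h3⟩ := C.hadj t (t + 2) hne
      (C.mod_ne (by omega) (by omega) (by omega))
      (C.mod_ne (by omega) (by omega) (by omega)) hlt
    exact ⟨e, he, h1⟩
  · exact absurd (C.hdist _ _ heq) hne
  · obtain ⟨e, he, h1, h2, h3⟩ := C.hadj (t + 2) t (Ne.symm hne)
      (C.mod_ne (by omega) (by omega) (by omega))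
      (C.mod_ne (by omega) (by omega) (by omega)) hgt
    exact ⟨e, he, by omega⟩

/-- Step 0, right: every vertex has an edge with `c t ≤ n - r + j`. -/
lemma step0R (t : ℤ) : ∃ e ∈ C.E, C.c t - e.2 ≤ C.n - C.r := by
  have hm5 := C.hm'
  have hne : (t : ℤ) % C.m ≠ (t + 2) % C.m := C.mod_ne (by omega) (by omega) (by omega)
  rcases lt_trichotomy (C.c t) (C.c (t + 2)) with hlt | heq | hgt
  · obtain ⟨e, he, h1, h2, h3⟩ := C.hadj t (t + 2) hne
      (C.mod_ne (by omega) (by omega) (by omega))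
      (C.mod_ne (by omega) (by omega) (by omega)) hlt
    refine ⟨e, he, ?_⟩
    have := C.hEr e he
    omega
  · exact absurd (C.hdist _ _ heq) hne
  · obtain ⟨e, he, h1, h2, h3⟩ := C.hadj (t + 2) t (Ne.symm hne)
      (C.mod_ne (by omega) (by omega) (by omega))
      (C.mod_ne (by omega) (by omega) (by omega)) hgt
    exact ⟨e, he, h3⟩

/-- Dichotomy: every hole edge is short or blocked. -/
lemma short_or_blocked (q : ℤ) : |C.c (q + 1) - C.c q| ≤ C.r - 2 ∨ C.Blocked q := by
  by_cases hb : C.Blocked q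
  · exact Or.inr hb
  left
  unfold Blocked at hb
  push_neg at hb
  obtain ⟨e, he, h1, h2⟩ := hb
  have hEe := C.hEr e he
  have hm5 := C.hm'
  have hne : C.c q ≠ C.c (q + 1) := C.val_ne (by omega) (by omega) (by omega)
  rcases lt_or_gt_of_ne hne with hlt | hgt
  · have hmin : min (C.c q) (C.c (q + 1)) = C.c q := min_eq_left hlt.le
    have hmax : max (C.c q) (C.c (q + 1)) = C.c (q + 1) := max_eq_right hlt.le
    rw [hmin] at h1; rw [hmax] at h2
    have hnp := C.hnonlt q hlt
    rw [Pred] at hnp; push_neg at hnp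
    have := hnp e he h1
    -- middle condition must fail
    rw [abs_of_pos (by omega)]
    omega
  · have hmin : min (C.c q) (C.c (q + 1)) = C.c (q + 1) := min_eq_right hgt.le
    have hmax : max (C.c q) (C.c (q + 1)) = C.c q := max_eq_left hgt.le
    rw [hmin] at h1; rw [hmax] at h2
    have hnp := C.hnongt q hgt
    rw [Pred] at hnp; push_neg at hnp
    have := hnp e he h1
    rw [abs_of_neg (by omega)]
    omega

lemma blocked_min {q : ℤ} (h : C.Blocked q) : min (C.c q) (C.c (q + 1)) ≤ C.r - 2 := by
  rcases le_total (C.c q) (C.c (q + 1)) with hle | hle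
  · obtain ⟨e, he, h2⟩ := C.step0R (q + 1)
    have := h e he
    have hEe := C.hEr e he
    simp only [min_eq_left hle, max_eq_right hle] at this ⊢
    omega
  · obtain ⟨e, he, h2⟩ := C.step0R q
    have := h e he
    have hEe := C.hEr e he
    simp only [min_eq_right hle, max_eq_left hle] at this ⊢
    omega

lemma blocked_max {q : ℤ} (h : C.Blocked q) : C.n - C.r + 3 ≤ max (C.c q) (C.c (q + 1)) := by
  rcases le_total (C.c q) (C.c (q + 1)) with hle | hle
  · obtain ⟨e, he, h2⟩ := C.step0L q
    have := h e he
    have hEe := C.hEr e he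
    simp only [min_eq_left hle, max_eq_right hle] at this ⊢
    omega
  · obtain ⟨e, he, h2⟩ := C.step0L (q + 1)
    have := h e he
    have hEe := C.hEr e he
    simp only [min_eq_right hle, max_eq_left hle] at this ⊢
    omega

/-- Valley lemma: a strict local minimum is low. -/
lemma valley (t : ℤ) (h1 : C.c (t + 1) < C.c t) (h2 : C.c (t + 1) < C.c (t + 2)) :
    C.c (t + 1) ≤ C.r - 2 := by
  have hm5 := C.hm'
  have hne : C.c t ≠ C.c (t + 2) := C.val_ne (by omega) (by omega) (by omega)
  rcases lt_or_gt_of_ne hne with hlt | hgt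
  · -- chord (t, t+2), use hole edge t+1 : (c(t+1), c(t+2))
    obtain ⟨e, he, g1, g2, g3⟩ := C.hadj t (t + 2)
      (C.mod_ne (by omega) (by omega) (by omega))
      (C.mod_ne (by omega) (by omega) (by omega))
      (C.mod_ne (by omega) (by omega) (by omega)) hlt
    have hEe := C.hEr e he
    have hnp := C.hnonlt (t + 1) (by rwa [show t + 1 + 1 = t + 2 by ring])
    rw [show t + 1 + 1 = t + 2 by ring] at hnp
    rw [Pred] at hnp; push_neg at hnp
    by_contra hcon
    have hfirst : e.1 ≤ C.c (t + 1) := by omega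
    have := hnp e he hfirst (by omega)
    omega
  · -- chord (t+2, t), use hole edge t : (c(t+1), c t)
    obtain ⟨e, he, g1, g2, g3⟩ := C.hadj (t + 2) t
      (C.mod_ne (by omega) (by omega) (by omega))
      (C.mod_ne (by omega) (by omega) (by omega))
      (C.mod_ne (by omega) (by omega) (by omega)) hgt
    have hEe := C.hEr e he
    have hnp := C.hnongt t h1
    rw [Pred] at hnp; push_neg at hnp
    by_contra hcon
    have hfirst : e.1 ≤ C.c (t + 1) := by omega
    have := hnp e he hfirst (by omega)
    omega

/-- Peak lemma: a strict local maximum is high. -/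
lemma peak (t : ℤ) (h1 : C.c t < C.c (t + 1)) (h2 : C.c (t + 2) < C.c (t + 1)) :
    C.n - C.r + 3 ≤ C.c (t + 1) := by
  have hm5 := C.hm'
  have hne : C.c t ≠ C.c (t + 2) := C.val_ne (by omega) (by omega) (by omega)
  rcases lt_or_gt_of_ne hne with hlt | hgt
  · -- chord (t, t+2), use hole edge t : (c t, c (t+1))
    obtain ⟨e, he, g1, g2, g3⟩ := C.hadj t (t + 2)
      (C.mod_ne (by omega) (by omega) (by omega))
      (C.mod_ne (by omega) (by omega) (by omega))
      (C.mod_ne (by omega) (by omega) (by omega)) hlt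
    have hEe := C.hEr e he
    have hnp := C.hnonlt t h1
    rw [Pred] at hnp; push_neg at hnp
    have := hnp e he g1 (by omega)
    omega
  · -- chord (t+2, t), use hole edge t+1 : (c(t+2), c(t+1))
    obtain ⟨e, he, g1, g2, g3⟩ := C.hadj (t + 2) t
      (C.mod_ne (by omega) (by omega) (by omega))
      (C.mod_ne (by omega) (by omega) (by omega))
      (C.mod_ne (by omega) (by omega) (by omega)) hgt
    have hEe := C.hEr e he
    have hnp := C.hnongt (t + 1) (by rwa [show t + 1 + 1 = t + 2 by ring])
    rw [show t + 1 + 1 = t + 2 by ring] at hnp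
    rw [Pred] at hnp; push_neg at hnp
    have := hnp e he g1 (by omega)
    omega

/-- Walk bound: if `L` consecutive edges are all short, endpoints differ by `≤ L(r-2)`. -/
lemma walk (p : ℤ) (L : ℕ) (h : ∀ k : ℕ, k < L → |C.c (p + k + 1) - C.c (p + k)| ≤ C.r - 2) :
    |C.c (p + L) - C.c p| ≤ L * (C.r - 2) := by
  induction L with
  | zero => simp
  | succ L ih =>
    have ih' := ih (fun k hk => h k (by omega))
    have hlast := h L (by omega)
    have e1 : (p + (L + 1 : ℕ) : ℤ) = p + L + 1 := by push_cast; ring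
    rw [e1]
    have htri : |C.c (p + L + 1) - C.c p| ≤
        |C.c (p + L + 1) - C.c (p + L)| + |C.c (p + L) - C.c p| := by
      have := abs_add_le (C.c (p + L + 1) - C.c (p + L)) (C.c (p + L) - C.c p)
      simpa using this
    push_cast
    nlinarith [hlast, ih', htri]

/-- Blocked is invariant under congruent positions. -/
lemma blocked_congr {q q' : ℤ} (h : q % (C.m : ℤ) = q' % (C.m : ℤ)) :
    C.Blocked q ↔ C.Blocked q' := by
  have hq : q ≡ q' [ZMOD (C.m : ℤ)] := h
  have h1 : C.c q = C.c q' := C.hcong _ _ h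
  have h2 : C.c (q + 1) = C.c (q' + 1) := C.hcong _ _ (hq.add_right 1)
  unfold Blocked
  rw [h1, h2]


/-! ### Transports -/

/-- Shift the hole by `k` positions. -/
def shift (k : ℤ) : Cfg where
  r := C.r
  n := C.n
  m := C.m
  E := C.E
  c := fun t => C.c (t + k)
  hE := C.hE
  hEr := C.hEr
  hm := C.hm
  hn := C.hn
  hcong := fun s t h => C.hcong (s + k) (t + k) (Int.ModEq.add_right k h)
  hdist := fun s t h => by
    have := C.hdist (s + k) (t + k) h
    have h2 : s + k ≡ t + k [ZMOD (C.m : ℤ)] := this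
    exact (Int.ModEq.add_right_cancel' k h2)
  hnonlt := fun t h => by
    have := C.hnonlt (t + k) (by rwa [show t + k + 1 = t + 1 + k by ring])
    rwa [show t + k + 1 = t + 1 + k by ring] at this
  hnongt := fun t h => by
    have := C.hnongt (t + k) (by rwa [show t + k + 1 = t + 1 + k by ring])
    rwa [show t + k + 1 = t + 1 + k by ring] at this
  hadj := fun s t h1 h2 h3 hlt => by
    refine C.hadj (s + k) (t + k) ?_ ?_ ?_ hlt
    · intro h; exact h1 (Int.ModEq.add_right_cancel' k h)
    · intro h
      apply h2
      have : s + k + 1 ≡ t + k [ZMOD (C.m : ℤ)] := h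
      have : s + 1 + k ≡ t + k [ZMOD (C.m : ℤ)] := by rwa [show s + 1 + k = s + k + 1 by ring]
      exact Int.ModEq.add_right_cancel' k this
    · intro h
      apply h3
      have : t + k + 1 ≡ s + k [ZMOD (C.m : ℤ)] := h
      have : t + 1 + k ≡ s + k [ZMOD (C.m : ℤ)] := by rwa [show t + 1 + k = t + k + 1 by ring]
      exact Int.ModEq.add_right_cancel' k this

@[simp] lemma shift_c (k t : ℤ) : (C.shift k).c t = C.c (t + k) := rfl
@[simp] lemma shift_r (k : ℤ) : (C.shift k).r = C.r := rfl
@[simp] lemma shift_n (k : ℤ) : (C.shift k).n = C.n := rfl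
@[simp] lemma shift_m (k : ℤ) : (C.shift k).m = C.m := rfl

lemma shift_blocked (k q : ℤ) : (C.shift k).Blocked q ↔ C.Blocked (q + k) := by
  unfold Blocked
  have : (C.shift k).c (q + 1) = C.c (q + k + 1) := by
    rw [shift_c, show q + 1 + k = q + k + 1 by ring]
  rw [shift_c, this]
  rfl

/-- Reverse the hole around offset `o`. -/
def rev (o : ℤ) : Cfg where
  r := C.r
  n := C.n
  m := C.m
  E := C.E
  c := fun t => C.c (o - t)
  hE := C.hE
  hEr := C.hEr
  hm := C.hm
  hn := C.hn
  hcong := fun s t h => C.hcong (o - s) (o - t) (Int.ModEq.sub_left o h)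
  hdist := fun s t h => by
    have h2 : o - s ≡ o - t [ZMOD (C.m : ℤ)] := C.hdist (o - s) (o - t) h
    have h3 := Int.ModEq.sub_left o h2
    have h4 : s ≡ t [ZMOD (C.m : ℤ)] := by simpa using h3
    exact h4
  hnonlt := fun t h => by
    show ¬ Pred C.r C.n C.E (C.c (o - t)) (C.c (o - (t + 1)))
    have h' : C.c (o - t) < C.c (o - (t + 1)) := h
    have e2 : o - t = (o - (t + 1)) + 1 := by ring
    rw [e2] at h' ⊢
    exact C.hnongt (o - (t + 1)) h'
  hnongt := fun t h => by
    show ¬ Pred C.r C.n C.E (C.c (o - (t + 1))) (C.c (o - t))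
    have h' : C.c (o - (t + 1)) < C.c (o - t) := h
    have e2 : o - t = (o - (t + 1)) + 1 := by ring
    rw [e2] at h' ⊢
    exact C.hnonlt (o - (t + 1)) h'
  hadj := fun s t h1 h2 h3 hlt => by
    refine C.hadj (o - s) (o - t) ?_ ?_ ?_ hlt
    · intro h
      have h' : o - s ≡ o - t [ZMOD (C.m : ℤ)] := h
      have := Int.ModEq.sub_left o h'
      simp only [sub_sub_cancel] at this
      exact h1 this
    · intro h
      have h' : o - s + 1 ≡ o - t [ZMOD (C.m : ℤ)] := h
      have := Int.ModEq.sub_left (o + 1) h'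
      have e1 : o + 1 - (o - s + 1) = s := by ring
      have e2 : o + 1 - (o - t) = t + 1 := by ring
      rw [e1, e2] at this
      exact h3 this.symm
    · intro h
      have h' : o - t + 1 ≡ o - s [ZMOD (C.m : ℤ)] := h
      have := Int.ModEq.sub_left (o + 1) h'
      have e1 : o + 1 - (o - t + 1) = t := by ring
      have e2 : o + 1 - (o - s) = s + 1 := by ring
      rw [e1, e2] at this
      exact h2 this.symm

@[simp] lemma rev_c (o t : ℤ) : (C.rev o).c t = C.c (o - t) := rfl
@[simp] lemma rev_r (o : ℤ) : (C.rev o).r = C.r := rfl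
@[simp] lemma rev_n (o : ℤ) : (C.rev o).n = C.n := rfl
@[simp] lemma rev_m (o : ℤ) : (C.rev o).m = C.m := rfl

lemma rev_blocked (o q : ℤ) : (C.rev o).Blocked q ↔ C.Blocked (o - q - 1) := by
  unfold Blocked
  have e1 : (C.rev o).c q = C.c ((o - q - 1) + 1) := by rw [rev_c]; ring_nf
  have e2 : (C.rev o).c (q + 1) = C.c (o - q - 1) := by rw [rev_c]; ring_nf
  rw [e1, e2]
  constructor <;> intro h e he <;> rcases h e he with h | h
  · exact Or.inl (by rwa [min_comm])
  · exact Or.inr (by rwa [max_comm])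
  · exact Or.inl (by rwa [min_comm])
  · exact Or.inr (by rwa [max_comm])

/-- Reflect values `u ↦ n + 1 - u` and the edge set accordingly. -/
def reflect : Cfg where
  r := C.r
  n := C.n
  m := C.m
  E := (fun e : ℤ × ℤ => (C.r + 1 - e.2, C.r + 1 - e.1)) '' C.E
  c := fun t => C.n + 1 - C.c t
  hE := C.hE.image _
  hEr := by
    rintro e' ⟨e, he, rfl⟩
    have := C.hEr e he
    constructor
    · simp; omega
    constructor
    · simp; omega
    · simp; omega
  hm := C.hm
  hn := C.hn
  hcong := fun s t h => by simp [C.hcong s t h]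
  hdist := fun s t h => by
    have h' : C.n + 1 - C.c s = C.n + 1 - C.c t := h
    exact C.hdist s t (by omega)
  hnonlt := by
    intro t h hP
    have h' : C.n + 1 - C.c t < C.n + 1 - C.c (t + 1) := h
    have h'' : C.c (t + 1) < C.c t := by omega
    apply C.hnongt t h''
    obtain ⟨e', ⟨e, he, rfl⟩, g1, g2, g3⟩ := hP
    simp only at g1 g2 g3
    refine ⟨e, he, by omega, by omega, by omega⟩
  hnongt := by
    intro t h hP
    have h' : C.n + 1 - C.c (t + 1) < C.n + 1 - C.c t := h
    have h'' : C.c t < C.c (t + 1) := by omega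
    apply C.hnonlt t h''
    obtain ⟨e', ⟨e, he, rfl⟩, g1, g2, g3⟩ := hP
    simp only at g1 g2 g3
    refine ⟨e, he, by omega, by omega, by omega⟩
  hadj := by
    intro s t h1 h2 h3 hlt
    have hlt0 : C.n + 1 - C.c s < C.n + 1 - C.c t := hlt
    have hlt' : C.c t < C.c s := by omega
    obtain ⟨e, he, g1, g2, g3⟩ := C.hadj t s (Ne.symm h1) h3 h2 hlt'
    show Pred _ _ _ (C.n + 1 - C.c s) (C.n + 1 - C.c t)
    exact ⟨(C.r + 1 - e.2, C.r + 1 - e.1), ⟨e, he, rfl⟩, by simp; omega, by simp; omega,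
      by simp; omega⟩

@[simp] lemma reflect_c (t : ℤ) : C.reflect.c t = C.n + 1 - C.c t := rfl
@[simp] lemma reflect_r : C.reflect.r = C.r := rfl
@[simp] lemma reflect_n : C.reflect.n = C.n := rfl
@[simp] lemma reflect_m : C.reflect.m = C.m := rfl

lemma reflect_blocked (q : ℤ) : C.reflect.Blocked q ↔ C.Blocked q := by
  have hmin : min (C.reflect.c q) (C.reflect.c (q + 1)) =
      C.n + 1 - max (C.c q) (C.c (q + 1)) := by
    simp only [reflect_c]
    rcases le_total (C.c q) (C.c (q + 1)) with hle | hle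
    · rw [max_eq_right hle, min_eq_right (by omega : C.n + 1 - C.c (q+1) ≤ C.n + 1 - C.c q)]
    · rw [max_eq_left hle, min_eq_left (by omega : C.n + 1 - C.c q ≤ C.n + 1 - C.c (q+1))]
  have hmax : max (C.reflect.c q) (C.reflect.c (q + 1)) =
      C.n + 1 - min (C.c q) (C.c (q + 1)) := by
    simp only [reflect_c]
    rcases le_total (C.c q) (C.c (q + 1)) with hle | hle
    · rw [min_eq_left hle, max_eq_left (by omega : C.n + 1 - C.c (q+1) ≤ C.n + 1 - C.c q)]
    · rw [min_eq_right hle, max_eq_right (by omega : C.n + 1 - C.c q ≤ C.n + 1 - C.c (q+1))]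
  unfold Blocked
  rw [hmin, hmax]
  constructor
  · intro h e he
    have := h (C.r + 1 - e.2, C.r + 1 - e.1) ⟨e, he, rfl⟩
    simp only [reflect_r, reflect_n] at this
    rcases this with h' | h'
    · right; omega
    · left; omega
  · rintro h e' ⟨e, he, rfl⟩
    have := h e he
    simp only [reflect_r, reflect_n]
    rcases this with h' | h'
    · right; omega
    · left; omega


/-! ### Main case lemmas -/

/-- Every integer has a congruent representative in `[0, m-1]`. -/
lemma rep (t : ℤ) : ∃ t' : ℤ, 0 ≤ t' ∧ t' ≤ (C.m : ℤ) - 1 ∧ C.c t' = C.c t := by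
  have hm5 := C.hm'
  refine ⟨t % (C.m : ℤ), Int.emod_nonneg t (by omega), ?_, ?_⟩
  · have := Int.emod_lt_of_pos t (show (0:ℤ) < C.m by omega)
    omega
  · exact C.hcong _ _ (Int.emod_emod_of_dvd t dvd_rfl)

/-- Global max value bound: there is `Q ∈ [0, m-1]` whose value dominates all. -/
lemma argmax : ∃ Q : ℤ, 0 ≤ Q ∧ Q ≤ (C.m : ℤ) - 1 ∧ ∀ t : ℤ, C.c t ≤ C.c Q := by
  have hm5 := C.hm'
  have hne : (Finset.Icc (0 : ℤ) ((C.m : ℤ) - 1)).Nonempty := by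
    refine ⟨0, ?_⟩; simp; omega
  obtain ⟨Q, hQmem, hQ⟩ := Finset.exists_max_image _ C.c hne
  rw [Finset.mem_Icc] at hQmem
  refine ⟨Q, hQmem.1, hQmem.2, fun t => ?_⟩
  obtain ⟨t', h1, h2, h3⟩ := C.rep t
  rw [← h3]
  exact hQ t' (Finset.mem_Icc.mpr ⟨h1, h2⟩)

lemma argmin : ∃ P : ℤ, 0 ≤ P ∧ P ≤ (C.m : ℤ) - 1 ∧ ∀ t : ℤ, C.c P ≤ C.c t := by
  have hm5 := C.hm'
  have hne : (Finset.Icc (0 : ℤ) ((C.m : ℤ) - 1)).Nonempty := by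
    refine ⟨0, ?_⟩; simp; omega
  obtain ⟨P, hPmem, hP⟩ := Finset.exists_min_image _ C.c hne
  rw [Finset.mem_Icc] at hPmem
  refine ⟨P, hPmem.1, hPmem.2, fun t => ?_⟩
  obtain ⟨t', h1, h2, h3⟩ := C.rep t
  rw [← h3]
  exact hP t' (Finset.mem_Icc.mpr ⟨h1, h2⟩)

/-- The global maximum is high. -/
lemma max_high {Q : ℤ} (hQ : ∀ t : ℤ, C.c t ≤ C.c Q) : C.n - C.r + 3 ≤ C.c Q := by
  have hm5 := C.hm'
  have h1 : C.c (Q - 1) < C.c Q := by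
    rcases lt_or_eq_of_le (hQ (Q - 1)) with h | h
    · exact h
    · exact absurd h (C.val_ne (by omega) (by omega) (by omega))
  have h2 : C.c (Q + 1) < C.c Q := by
    rcases lt_or_eq_of_le (hQ (Q + 1)) with h | h
    · exact h
    · exact absurd h (C.val_ne (by omega) (by omega) (by omega))
  have := C.peak (Q - 1) (by rw [show Q - 1 + 1 = Q by ring]; exact h1)
    (by rw [show Q - 1 + 2 = Q + 1 by ring, show Q - 1 + 1 = Q by ring]; exact h2)
  rwa [show Q - 1 + 1 = Q by ring] at this

/-- The global minimum is low. -/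
lemma min_low {P : ℤ} (hP : ∀ t : ℤ, C.c P ≤ C.c t) : C.c P ≤ C.r - 2 := by
  have hm5 := C.hm'
  have h1 : C.c P < C.c (P - 1) := by
    rcases lt_or_eq_of_le (hP (P - 1)) with h | h
    · exact h
    · exact absurd h.symm (C.val_ne (by omega) (by omega) (by omega))
  have h2 : C.c P < C.c (P + 1) := by
    rcases lt_or_eq_of_le (hP (P + 1)) with h | h
    · exact h
    · exact absurd h.symm (C.val_ne (by omega) (by omega) (by omega))
  have := C.valley (P - 1) (by rw [show P - 1 + 1 = P by ring]; exact h1)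
    (by rw [show P - 1 + 2 = P + 1 by ring, show P - 1 + 1 = P by ring]; exact h2)
  rwa [show P - 1 + 1 = P by ring] at this

/-- Case: no blocked edges at all. -/
lemma noBlockedCase (h : ∀ q : ℤ, ¬ C.Blocked q) : False := by
  have hm5 := C.hm'
  have hr2 := C.hr2
  have hband := C.band
  have hshort : ∀ q : ℤ, |C.c (q + 1) - C.c q| ≤ C.r - 2 := fun q =>
    (C.short_or_blocked q).resolve_right (h q)
  obtain ⟨Q, hQ0, hQ1, hQ⟩ := C.argmax
  obtain ⟨P, hP0, hP1, hP⟩ := C.argmin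
  have hy := C.max_high hQ
  have hx := C.min_low hP
  have hnr := C.nr3
  have hyx : C.n - 2 * C.r + 5 ≤ C.c Q - C.c P := by omega
  have hPQ : P ≠ Q := by
    intro hEq; rw [hEq] at hx; omega
  have key : ∀ (p : ℤ) (L : ℕ), |C.c (p + (L : ℤ)) - C.c p| = C.c Q - C.c P →
      C.n - 2 * C.r + 5 ≤ (L : ℤ) * (C.r - 2) := by
    intro p L habs
    have := C.walk p L (fun k _ => hshort (p + k))
    omega
  have hper : C.c (P + (C.m : ℤ)) = C.c P := by
    refine C.hcong _ _ ?_
    simpa using Int.add_mul_emod_self_left (a := P) (b := (C.m : ℤ)) (c := 1)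
  rcases lt_or_gt_of_ne hPQ with hlt | hgt
  · have h1 := key P (Q - P).toNat (by
      rw [show P + ((Q - P).toNat : ℤ) = Q by omega]
      rw [abs_of_nonneg (by omega)])
    have h2 := key Q ((C.m : ℤ) - (Q - P)).toNat (by
      rw [show Q + (((C.m : ℤ) - (Q - P)).toNat : ℤ) = P + (C.m : ℤ) by omega, hper]
      rw [abs_of_nonpos (by omega)]; ring)
    have e1 : ((Q - P).toNat : ℤ) = Q - P := by omega
    have e2 : ((((C.m : ℤ) - (Q - P)).toNat : ℤ)) = (C.m : ℤ) - (Q - P) := by omega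
    rw [e1] at h1; rw [e2] at h2
    nlinarith [mul_nonneg (show (0:ℤ) ≤ (C.m : ℤ) - 4 by omega) (show (0:ℤ) ≤ C.r - 2 by omega)]
  · have hper' : C.c (Q + (C.m : ℤ)) = C.c Q := by
      refine C.hcong _ _ ?_
      simpa using Int.add_mul_emod_self_left (a := Q) (b := (C.m : ℤ)) (c := 1)
    have h1 := key Q (P - Q).toNat (by
      rw [show Q + (((P - Q).toNat) : ℤ) = P by omega]
      rw [abs_of_nonpos (by omega)]; ring)
    have h2 := key P ((C.m : ℤ) - (P - Q)).toNat (by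
      rw [show P + (((C.m : ℤ) - (P - Q)).toNat : ℤ) = Q + (C.m : ℤ) by omega, hper']
      rw [abs_of_nonneg (by omega)])
    have e1 : (((P - Q).toNat) : ℤ) = P - Q := by omega
    have e2 : ((((C.m : ℤ) - (P - Q)).toNat : ℤ)) = (C.m : ℤ) - (P - Q) := by omega
    rw [e1] at h1; rw [e2] at h2
    nlinarith [mul_nonneg (show (0:ℤ) ≤ (C.m : ℤ) - 4 by omega) (show (0:ℤ) ≤ C.r - 2 by omega)]


lemma h5r : 5 * C.r ≤ C.n := by
  have h1 := C.hn; have h2 := C.hm'; have h3 := C.hr2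
  nlinarith

/-- Case: exactly one blocked edge (at position 0), oriented so `c 0 < c 1`. -/
lemma singleCase (hb0 : C.Blocked 0) (huniq : ∀ q : ℤ, q % (C.m : ℤ) ≠ 0 % (C.m : ℤ) → ¬ C.Blocked q)
    (horder : C.c 0 < C.c 1) : False := by
  have hm5 := C.hm'
  have hr2 := C.hr2
  have hband := C.band
  have hnr := C.nr3
  have h5r := C.h5r
  have hlow : C.c 0 ≤ C.r - 2 := by
    have h := C.blocked_min hb0
    rw [show (0:ℤ)+1 = 1 by ring, min_eq_left horder.le] at h
    exact h
  have hhigh : C.n - C.r + 3 ≤ C.c 1 := by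
    have h := C.blocked_max hb0
    rw [show (0:ℤ)+1 = 1 by ring, max_eq_right horder.le] at h
    exact h
  have hx1 : 1 ≤ C.c 0 := by
    obtain ⟨e, he, h1⟩ := C.step0L 0
    have := C.hEr e he; omega
  have hb0' : ∀ e ∈ C.E, C.c 0 < e.1 ∨ C.n - C.r + e.2 < C.c 1 := by
    intro e he
    have h := hb0 e he
    rwa [show (0:ℤ)+1 = 1 by ring, min_eq_left horder.le, max_eq_right horder.le] at h
  have hshort : ∀ q : ℤ, q % (C.m : ℤ) ≠ 0 % (C.m : ℤ) → |C.c (q + 1) - C.c q| ≤ C.r - 2 :=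
    fun q hq => (C.short_or_blocked q).resolve_right (huniq q hq)
  -- c 0 < c 2 < c 1
  have hc2a : C.c 0 < C.c 2 := by
    rcases lt_trichotomy (C.c 0) (C.c 2) with h | h | h
    · exact h
    · exact absurd h (C.val_ne (by omega) (by omega) (by omega))
    · exfalso
      have := hshort 1 (C.mod_ne (by omega) (by omega) (by omega))
      rw [show (1:ℤ) + 1 = 2 by ring] at this
      rw [abs_of_nonpos (by omega)] at this
      omega
  have hc2b : C.c 2 < C.c 1 := by
    obtain ⟨e, he, g1, g2, g3⟩ := C.hadj 0 2 (C.mod_ne (by omega) (by omega) (by omega))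
      (C.mod_ne (by omega) (by omega) (by omega))
      (C.mod_ne (by omega) (by omega) (by omega)) hc2a
    rcases hb0' e he with h | h <;> omega
  -- monotone descent
  have mono : ∀ k : ℕ, 1 ≤ (k : ℤ) → (k : ℤ) ≤ (C.m : ℤ) - 2 → C.c (k + 1) < C.c (k : ℤ) := by
    intro k
    induction k using Nat.strong_induction_on with
    | _ k ih =>
      intro hk1 hk2
      rcases Nat.lt_or_ge k 2 with hk | hk
      · interval_cases k
        · omega
        · simpa using hc2b
      · -- k ≥ 2
        by_contra hcon
        push_neg at hcon
        have hne : C.c (k : ℤ) ≠ C.c ((k : ℤ) + 1) := C.val_ne (by omega) (by omega) (by omega)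
        have hlt : C.c (k : ℤ) < C.c ((k : ℤ) + 1) := by
          rcases lt_or_eq_of_le hcon with h | h
          · exact h
          · exact absurd h hne
        -- previous step is descending
        have hprev : C.c (k : ℤ) < C.c ((k : ℤ) - 1) := by
          have := ih (k - 1) (by omega) (by push_cast <;> omega) (by push_cast <;> omega)
          have e1 : (((k - 1 : ℕ) : ℤ)) = (k : ℤ) - 1 := by push_cast; omega
          rw [e1] at this
          rwa [show (k : ℤ) - 1 + 1 = (k : ℤ) by ring] at this
        -- local min ⇒ low
        have hval := C.valley ((k : ℤ) - 1)
          (by rw [show (k:ℤ) - 1 + 1 = (k:ℤ) by ring]; exact hprev)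
          (by rw [show (k:ℤ) - 1 + 2 = (k:ℤ) + 1 by ring, show (k:ℤ) - 1 + 1 = (k:ℤ) by ring]
              exact hlt)
        rw [show (k:ℤ) - 1 + 1 = (k:ℤ) by ring] at hval
        -- walk from 1 to k
        have hw := C.walk 1 (k - 1) (fun i hi => by
          apply hshort
          apply C.mod_ne <;> push_cast <;> omega)
        have e1 : ((1 : ℤ) + ((k - 1 : ℕ) : ℤ)) = (k : ℤ) := by push_cast; omega
        have e0 : (((k - 1 : ℕ)) : ℤ) = (k : ℤ) - 1 := by push_cast; omega
        rw [e1, e0] at hw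
        have hw' : C.c 1 - C.c (k : ℤ) ≤ ((k:ℤ) - 1) * (C.r - 2) := by
          rw [abs_le] at hw
          omega
        have hbig : C.n - 2 * C.r + 5 ≤ C.c 1 - C.c (k : ℤ) := by omega
        nlinarith
  -- monotone chain
  have chain : ∀ a b : ℕ, 1 ≤ (a : ℤ) → (a : ℤ) ≤ (b : ℤ) → (b : ℤ) ≤ (C.m : ℤ) - 1 →
      C.c (b : ℤ) ≤ C.c (a : ℤ) := by
    intro a b ha hab hb
    induction b with
    | zero => omega
    | succ b ih =>
      rcases Nat.lt_or_ge a (b + 1) with h | h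
      · have hih := ih (by omega) (by push_cast at hb ⊢; omega)
        have := mono b (by omega) (by push_cast at hb ⊢; omega)
        push_cast
        push_cast at hih this
        omega
      · have : a = b + 1 := by omega
        rw [this]
  -- the second chord
  have hm2lt : C.c ((C.m : ℤ) - 2) < C.c 1 := by
    have h1 : C.c ((C.m : ℤ) - 2) ≤ C.c 2 := by
      have := chain 2 (C.m - 2) (by push_cast <;> omega) (by push_cast <;> omega) (by push_cast <;> omega)
      have e1 : (((C.m - 2 : ℕ)) : ℤ) = (C.m : ℤ) - 2 := by push_cast; omega
      rw [e1] at this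
      exact_mod_cast this
    omega
  obtain ⟨e2, he2, g1, g2, g3⟩ := C.hadj ((C.m : ℤ) - 2) 1
    (C.mod_ne (by omega) (by omega) (by omega))
    (C.mod_ne (by omega) (by omega) (by omega))
    (C.mod_ne (by omega) (by omega) (by omega)) hm2lt
  have hEe2 := C.hEr e2 he2
  have hi2 : C.c 0 < e2.1 := by
    rcases hb0' e2 he2 with h | h
    · exact h
    · omega
  -- step bounds for positions 1..m-3
  have hstep : ∀ t : ℕ, 1 ≤ (t : ℤ) → (t : ℤ) ≤ (C.m : ℤ) - 3 →
      C.c (t : ℤ) - C.c ((t : ℤ) + 1) ≤ e2.2 - e2.1 - 1 := by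
    intro t ht1 ht2
    have hmono := mono t ht1 (by omega)
    have hnp := C.hnongt (t : ℤ) hmono
    rw [Pred] at hnp; push_neg at hnp
    have hA : e2.1 ≤ C.c ((t : ℤ) + 1) := by
      have := chain (t + 1) (C.m - 2) (by push_cast <;> omega) (by push_cast <;> omega)
        (by push_cast <;> omega)
      have e1 : (((C.m - 2 : ℕ)) : ℤ) = (C.m : ℤ) - 2 := by push_cast; omega
      have e2' : (((t + 1 : ℕ)) : ℤ) = (t : ℤ) + 1 := by push_cast; ring
      rw [e1, e2'] at this
      omega
    have hB : C.c (t : ℤ) - e2.2 ≤ C.n - C.r := by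
      have := chain 1 t (by omega) (by omega) (by omega)
      push_cast at this
      omega
    have := hnp e2 he2 hA
    omega
  -- telescoping
  have tele : ∀ k : ℕ, (k : ℤ) ≤ (C.m : ℤ) - 3 →
      C.c 1 - C.c (1 + (k : ℤ)) ≤ (k : ℤ) * (e2.2 - e2.1 - 1) := by
    intro k
    induction k with
    | zero => intro _; simp
    | succ k ih =>
      intro hk
      have ih' := ih (by push_cast at hk ⊢; omega)
      have hs := hstep (k + 1) (by push_cast <;> omega) (by push_cast at hk ⊢; omega)
      push_cast at hs ih' ⊢
      have e1 : (1 : ℤ) + ((k : ℤ) + 1) = ((k : ℤ) + 1) + 1 := by ring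
      rw [e1]
      rw [show (1:ℤ) + (k:ℤ) = (k:ℤ) + 1 by ring] at ih'
      have e2 : ((k:ℤ)+1) * (e2.2 - e2.1 - 1) = (k:ℤ)*(e2.2-e2.1-1) + (e2.2-e2.1-1) := by ring
      linarith
  have htel := tele (C.m - 4) (by push_cast <;> omega)
  have e1 : ((1 : ℤ) + ((C.m - 4 : ℕ) : ℤ)) = (C.m : ℤ) - 3 := by push_cast; omega
  have e1' : (((C.m - 4 : ℕ)) : ℤ) = (C.m : ℤ) - 4 := by push_cast; omega
  rw [e1, e1'] at htel
  -- last three steps short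
  have hlast : ∀ t : ℤ, t = (C.m : ℤ) - 3 ∨ t = (C.m : ℤ) - 2 ∨ t = (C.m : ℤ) - 1 →
      |C.c (t + 1) - C.c t| ≤ C.r - 2 := by
    intro t ht
    apply hshort
    apply C.mod_ne <;> omega
  have hl1 := hlast ((C.m : ℤ) - 3) (by left; rfl)
  have hl2 := hlast ((C.m : ℤ) - 2) (by right; left; rfl)
  have hl3 := hlast ((C.m : ℤ) - 1) (by right; right; rfl)
  rw [show (C.m : ℤ) - 3 + 1 = (C.m : ℤ) - 2 by ring] at hl1
  rw [show (C.m : ℤ) - 2 + 1 = (C.m : ℤ) - 1 by ring] at hl2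
  rw [show (C.m : ℤ) - 1 + 1 = (C.m : ℤ) by ring] at hl3
  have hwrap : C.c ((C.m : ℤ)) = C.c 0 := C.hcong _ _ (by simp [Int.emod_self])
  rw [hwrap] at hl3
  rw [abs_le] at hl1 hl2 hl3
  -- final contradiction
  have hn := C.hn
  have key1 : 0 ≤ ((C.m : ℤ) - 4) * ((C.r - C.c 0 - 2) - (e2.2 - e2.1 - 1)) :=
    mul_nonneg (by omega) (by omega)
  have key2 : 0 ≤ ((C.m : ℤ) - 5) * (C.c 0 - 1) := mul_nonneg (by omega) (by omega)
  nlinarith [htel, hl1, hl2, hl3, hhigh, hx1, key1, key2]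


/-- Cross-chord: two blocked edges at non-adjacent positions force a strict
comparison of their top values. -/
lemma crossmax (q : ℤ) (hb0 : C.Blocked 0) (hbq : C.Blocked q)
    (h0 : q % (C.m : ℤ) ≠ 0 % (C.m : ℤ))
    (h1 : q % (C.m : ℤ) ≠ 1 % (C.m : ℤ))
    (h2 : q % (C.m : ℤ) ≠ (-1) % (C.m : ℤ))
    (hnc : ∀ t : ℤ, ¬ (C.Blocked t ∧ C.Blocked (t + 1))) :
    max (C.c q) (C.c (q + 1)) < max (C.c 0) (C.c 1) := by
  have hm5 := C.hm'
  have hr2 := C.hr2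
  have hnr := C.nr3
  have h5r := C.h5r
  have hmin0 := C.blocked_min hb0
  have hmax0 := C.blocked_max hb0
  have hminq := C.blocked_min hbq
  have hmaxq := C.blocked_max hbq
  rw [show (0:ℤ)+1 = 1 by ring] at hmin0 hmax0
  have mshift : ∀ (d : ℤ) {a b : ℤ}, a % (C.m : ℤ) = b % (C.m : ℤ) →
      (a + d) % (C.m : ℤ) = (b + d) % (C.m : ℤ) := fun d _ _ h => Int.ModEq.add_right d h
  -- the chord and the conclusion, given positions
  have core : ∀ p1 p2 : ℤ, C.c p1 = min (C.c 0) (C.c 1) → C.c p2 = max (C.c q) (C.c (q+1)) →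
      p1 % (C.m : ℤ) ≠ p2 % (C.m : ℤ) → (p1 + 1) % (C.m : ℤ) ≠ p2 % (C.m : ℤ) →
      (p2 + 1) % (C.m : ℤ) ≠ p1 % (C.m : ℤ) →
      max (C.c q) (C.c (q + 1)) < max (C.c 0) (C.c 1) := by
    intro p1 p2 hv1 hv2 hc1 hc2 hc3
    have hord : C.c p1 < C.c p2 := by rw [hv1, hv2]; omega
    obtain ⟨e, he, g1, g2, g3⟩ := C.hadj p1 p2 hc1 hc2 hc3 hord
    rw [hv1] at g1
    rw [hv2] at g2 g3
    rcases hb0 e he with h | h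
    · rw [show (0:ℤ)+1 = 1 by ring] at h; omega
    · rw [show (0:ℤ)+1 = 1 by ring] at h; omega
  -- special configuration A : q ≡ 2 with c 1 low and c q high
  have specialA : q % (C.m : ℤ) = 2 % (C.m : ℤ) → C.c 1 ≤ C.r - 2 →
      C.n - C.r + 3 ≤ C.c q → False := by
    intro hq hlowv hhighv
    have hc2q : C.c 2 = C.c q := C.hcong _ _ hq.symm
    have hgap : ¬ |C.c (1 + 1) - C.c 1| ≤ C.r - 2 := by
      rw [show (1:ℤ)+1 = 2 by ring, hc2q, abs_of_nonneg (by omega)]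
      omega
    have hB1 : C.Blocked 1 := (C.short_or_blocked 1).resolve_left hgap
    exact hnc 0 ⟨hb0, by rwa [show (0:ℤ)+1 = 1 by ring]⟩
  -- special configuration B : q ≡ -2 with c 0 low and c (q+1) high
  have specialB : (q + 2) % (C.m : ℤ) = 0 % (C.m : ℤ) → C.c 0 ≤ C.r - 2 →
      C.n - C.r + 3 ≤ C.c (q + 1) → False := by
    intro hq hlowv hhighv
    have hq1 : (q + 1) % (C.m : ℤ) = (-1) % (C.m : ℤ) := by
      have h' := mshift (-1) hq
      rw [show q + 2 + -1 = q + 1 by ring, show (0:ℤ) + -1 = -1 by ring] at h'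
      exact h'
    have hcm1 : C.c (-1) = C.c (q + 1) := C.hcong _ _ hq1.symm
    have hgap : ¬ |C.c (-1 + 1) - C.c (-1)| ≤ C.r - 2 := by
      rw [show (-1:ℤ)+1 = 0 by ring, hcm1, abs_of_nonpos (by omega)]
      omega
    have hBm1 : C.Blocked (-1) := (C.short_or_blocked (-1)).resolve_left hgap
    exact hnc (-1) ⟨hBm1, by rwa [show (-1:ℤ)+1 = 0 by ring]⟩
  rcases le_total (C.c 0) (C.c 1) with hA | hA <;> rcases le_total (C.c q) (C.c (q + 1)) with hB | hB
  · -- p1 = 0, p2 = q+1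
    refine core 0 (q + 1) (min_eq_left hA).symm (max_eq_right hB).symm ?_ ?_ ?_
    · intro h
      have h' := mshift (-1) h.symm
      rw [show q + 1 + -1 = q by ring, show (0:ℤ) + -1 = -1 by ring] at h'
      exact h2 h'
    · intro h
      have h' := mshift (-1) h.symm
      rw [show q + 1 + -1 = q by ring, show (0:ℤ) + 1 + -1 = 0 by ring] at h'
      exact h0 h'
    · intro h
      refine specialB ?_ (by omega) (by rw [max_eq_right hB] at hmaxq; exact hmaxq)
      rw [show q + 2 = q + 1 + 1 by ring]
      exact h
  · -- p1 = 0, p2 = q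
    refine core 0 q (min_eq_left hA).symm (max_eq_left hB).symm ?_ ?_ ?_
    · exact fun h => h0 h.symm
    · intro h
      exact h1 (by rw [show (0:ℤ) + 1 = 1 by ring] at h; exact h.symm)
    · intro h
      have h' := mshift (-1) h
      rw [show q + 1 + -1 = q by ring, show (0:ℤ) + -1 = -1 by ring] at h'
      exact h2 h'
  · -- p1 = 1, p2 = q+1
    refine core 1 (q + 1) (min_eq_right hA).symm (max_eq_right hB).symm ?_ ?_ ?_
    · intro h
      have h' := mshift (-1) h.symm
      rw [show q + 1 + -1 = q by ring, show (1:ℤ) + -1 = 0 by ring] at h'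
      exact h0 h'
    · intro h
      have h' := mshift (-1) h.symm
      rw [show q + 1 + -1 = q by ring, show (1:ℤ) + 1 + -1 = 1 by ring] at h'
      exact h1 h'
    · intro h
      have h' := mshift (-2) h
      rw [show q + 1 + 1 + -2 = q by ring, show (1:ℤ) + -2 = -1 by ring] at h'
      exact h2 h'
  · -- p1 = 1, p2 = q
    refine core 1 q (min_eq_right hA).symm (max_eq_left hB).symm ?_ ?_ ?_
    · exact fun h => h1 h.symm
    · intro h
      refine specialA ?_ (by omega) (by rw [max_eq_left hB] at hmaxq; exact hmaxq)
      rw [show (2:ℤ) = 1 + 1 by ring]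
      exact h.symm
    · intro h
      have h' := mshift (-1) h
      rw [show q + 1 + -1 = q by ring, show (1:ℤ) + -1 = 0 by ring] at h'
      exact h0 h'

/-- Case: two blocked edges at non-adjacent positions. -/
lemma pairCase (q : ℤ) (hb0 : C.Blocked 0) (hbq : C.Blocked q)
    (h0 : q % (C.m : ℤ) ≠ 0 % (C.m : ℤ))
    (h1 : q % (C.m : ℤ) ≠ 1 % (C.m : ℤ))
    (h2 : q % (C.m : ℤ) ≠ (-1) % (C.m : ℤ))
    (hnc : ∀ t : ℤ, ¬ (C.Blocked t ∧ C.Blocked (t + 1))) : False := by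
  have hA := C.crossmax q hb0 hbq h0 h1 h2 hnc
  set C' := C.shift q with hC'
  have hb0' : C'.Blocked 0 := by
    rw [hC', C.shift_blocked]
    rwa [zero_add]
  have hbq' : C'.Blocked (-q) := by
    rw [hC', C.shift_blocked]
    rwa [neg_add_cancel]
  have hm' : (C'.m : ℤ) = (C.m : ℤ) := by rw [hC']; rfl
  have h0' : (-q) % (C'.m : ℤ) ≠ 0 % (C'.m : ℤ) := by
    rw [hm']
    intro h
    have h' : q % (C.m : ℤ) = (0:ℤ) % (C.m : ℤ) := by
      have := (show (-q) ≡ 0 [ZMOD (C.m : ℤ)] from h).neg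
      rw [show -(-q) = q by ring, show -(0:ℤ) = 0 by ring] at this
      exact this
    exact h0 h'
  have h1' : (-q) % (C'.m : ℤ) ≠ 1 % (C'.m : ℤ) := by
    rw [hm']
    intro h
    have h' : q % (C.m : ℤ) = (-1:ℤ) % (C.m : ℤ) := by
      have := (show (-q) ≡ 1 [ZMOD (C.m : ℤ)] from h).neg
      rw [show -(-q) = q by ring] at this
      exact this
    exact h2 h'
  have h2' : (-q) % (C'.m : ℤ) ≠ (-1) % (C'.m : ℤ) := by
    rw [hm']
    intro h
    have h' : q % (C.m : ℤ) = (1:ℤ) % (C.m : ℤ) := by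
      have := (show (-q) ≡ -1 [ZMOD (C.m : ℤ)] from h).neg
      rw [show -(-q) = q by ring, show -(-1:ℤ) = 1 by ring] at this
      exact this
    exact h1 h'
  have hnc' : ∀ t : ℤ, ¬ (C'.Blocked t ∧ C'.Blocked (t + 1)) := by
    intro t ht
    rw [hC', C.shift_blocked, C.shift_blocked] at ht
    exact hnc (t + q) ⟨ht.1, by rw [show t + q + 1 = t + 1 + q by ring]; exact ht.2⟩
  have hB := C'.crossmax (-q) hb0' hbq' h0' h1' h2' hnc'
  have e1 : C'.c (-q) = C.c 0 := by rw [hC', C.shift_c]; norm_num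
  have e2 : C'.c (-q + 1) = C.c 1 := by rw [hC', C.shift_c]; ring_nf
  have e3 : C'.c 0 = C.c q := by rw [hC', C.shift_c]; norm_num
  have e4 : C'.c 1 = C.c (q + 1) := by rw [hC', C.shift_c]; ring_nf
  rw [e1, e2, e3, e4] at hB
  omega


/-- Case: two blocked edges sharing a low vertex (at position 0),
oriented so that `c (-1) < c 1`. -/
lemma sharedLowCase (hbm1 : C.Blocked (-1)) (hb0 : C.Blocked 0)
    (hlow : C.c 0 ≤ C.r - 2) (horder : C.c (-1) < C.c 1) : False := by
  have hm5 := C.hm'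
  have hr2 := C.hr2
  have hband := C.band
  have hnr := C.nr3
  have h5r := C.h5r
  -- the two high ends
  have hh : C.n - C.r + 3 ≤ C.c 1 ∧ C.c 0 < C.c 1 := by
    have h := C.blocked_max hb0
    rw [show (0:ℤ)+1 = 1 by ring] at h
    rcases le_total (C.c 0) (C.c 1) with hle | hle
    · rw [max_eq_right hle] at h
      constructor
      · exact h
      · omega
    · rw [max_eq_left hle] at h; omega
  have hh' : C.n - C.r + 3 ≤ C.c (-1) ∧ C.c 0 < C.c (-1) := by
    have h := C.blocked_max hbm1
    rw [show (-1:ℤ)+1 = 0 by ring] at h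
    rcases le_total (C.c (-1)) (C.c 0) with hle | hle
    · rw [max_eq_right hle] at h; omega
    · rw [max_eq_left hle] at h
      constructor
      · exact h
      · omega
  have hbm1' : ∀ e ∈ C.E, C.c 0 < e.1 ∨ C.n - C.r + e.2 < C.c (-1) := by
    intro e he
    have h := hbm1 e he
    rwa [show (-1:ℤ)+1 = 0 by ring, min_eq_right hh'.2.le, max_eq_left hh'.2.le] at h
  have hb0' : ∀ e ∈ C.E, C.c 0 < e.1 ∨ C.n - C.r + e.2 < C.c 1 := by
    intro e he
    have h := hb0 e he
    rwa [show (0:ℤ)+1 = 1 by ring, min_eq_left hh.2.le, max_eq_right hh.2.le] at h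
  -- (A) every interior vertex is below c (-1)
  have hA : ∀ s : ℤ, 2 ≤ s → s ≤ (C.m : ℤ) - 2 → C.c s < C.c (-1) := by
    intro s hs1 hs2
    rcases lt_trichotomy (C.c 0) (C.c s) with hcs | hcs | hcs
    · obtain ⟨e, he, g1, g2, g3⟩ := C.hadj 0 s
        (C.mod_ne (by omega) (by omega) (by omega))
        (C.mod_ne (by omega) (by omega) (by omega))
        (C.mod_ne (by omega) (by omega) (by omega)) hcs
      rcases hbm1' e he with h | h
      · omega
      · omega
    · exact absurd hcs (C.val_ne (by omega) (by omega) (by omega))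
    · omega
  -- (B) no blocked edges strictly inside
  have hB : ∀ k : ℤ, 2 ≤ k → k ≤ (C.m : ℤ) - 3 → ¬ C.Blocked k := by
    intro k hk1 hk2 hbk
    have hν : C.n - C.r + 3 ≤ max (C.c k) (C.c (k + 1)) := C.blocked_max hbk
    have hμ : min (C.c k) (C.c (k + 1)) ≤ C.r - 2 := C.blocked_min hbk
    have hAk := hA k (by omega) (by omega)
    have hAk1 := hA (k + 1) (by omega) (by omega)
    rcases le_total (C.c k) (C.c (k + 1)) with hkk | hkk
    · -- min is c k at position k
      rw [min_eq_left hkk] at hμ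
      rw [max_eq_right hkk] at hν
      rcases eq_or_lt_of_le hk1 with hk2' | hk3
      · -- k = 2 : special
        have hk2'' : k = 2 := hk2'.symm
        subst hk2''
        -- edge 1 is blocked
        have hgap : ¬ |C.c (1 + 1) - C.c 1| ≤ C.r - 2 := by
          rw [show (1:ℤ)+1 = 2 by ring, abs_of_nonpos (by omega)]
          omega
        have hB1 : C.Blocked 1 := (C.short_or_blocked 1).resolve_left hgap
        -- chord (2, -1)
        obtain ⟨e, he, g1, g2, g3⟩ := C.hadj 2 (-1)
          (C.mod_ne (by omega) (by omega) (by omega))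
          (C.mod_ne (by omega) (by omega) (by omega))
          (C.mod_ne (by omega) (by omega) (by omega)) (by omega)
        rcases hbk e he with h | h
        · rw [min_eq_left hkk] at h; omega
        · rw [max_eq_right hkk] at h
          have := hA 3 (by omega) (by omega)
          rw [show (2:ℤ)+1 = 3 by ring] at h
          omega
      · -- k ≥ 3 : cross chord (k, 1)
        obtain ⟨e, he, g1, g2, g3⟩ := C.hadj k 1
          (C.mod_ne (by omega) (by omega) (by omega))
          (C.mod_ne (by omega) (by omega) (by omega))
          (C.mod_ne (by omega) (by omega) (by omega)) (by omega)
        rcases hbk e he with h | h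
        · rw [min_eq_left hkk] at h; omega
        · rw [max_eq_right hkk] at h; omega
    · -- min is c (k+1) at position k+1 ≥ 3
      rw [min_eq_right hkk] at hμ
      rw [max_eq_left hkk] at hν
      obtain ⟨e, he, g1, g2, g3⟩ := C.hadj (k + 1) 1
        (C.mod_ne (by omega) (by omega) (by omega))
        (C.mod_ne (by omega) (by omega) (by omega))
        (C.mod_ne (by omega) (by omega) (by omega)) (by omega)
      rcases hbk e he with h | h
      · rw [min_eq_right hkk] at h; omega
      · rw [max_eq_left hkk] at h; omega
  -- wrap values
  have hwrap : ∀ a : ℤ, C.c ((C.m : ℤ) + a) = C.c a := fun a => C.hcong _ _ (by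
    have h : ((C.m : ℤ) + a) % (C.m : ℤ) = a % (C.m : ℤ) := by
      have := Int.add_mul_emod_self_left (a := a) (b := (C.m : ℤ)) (c := 1)
      simpa [add_comm] using this
    exact h)
  have hwrapm1 : C.c ((C.m : ℤ) - 1) = C.c (-1) := by
    have := hwrap (-1)
    rwa [show (C.m : ℤ) + -1 = (C.m : ℤ) - 1 by ring] at this
  have hwrapm2 : C.c ((C.m : ℤ) - 2) = C.c (-2) := by
    have := hwrap (-2)
    rwa [show (C.m : ℤ) + -2 = (C.m : ℤ) - 2 by ring] at this
  -- case analysis on the two remaining possible blocked edges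
  by_cases hB1 : C.Blocked 1 <;> by_cases hBm2 : C.Blocked (-2)
  · -- both : z > z' and z' > z
    have hz : C.c 2 ≤ C.r - 2 ∧ C.c 2 < C.c 1 := by
      have h1 := C.blocked_min hB1
      have h2 := C.blocked_max hB1
      rw [show (1:ℤ)+1 = 2 by ring] at h1 h2
      rcases le_total (C.c 1) (C.c 2) with hle | hle
      · rw [min_eq_left hle] at h1; omega
      · rw [min_eq_right hle] at h1
        constructor
        · exact h1
        · omega
    have hz' : C.c (-2) ≤ C.r - 2 ∧ C.c (-2) < C.c (-1) := by
      have h1 := C.blocked_min hBm2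
      have h2 := C.blocked_max hBm2
      rw [show (-2:ℤ)+1 = -1 by ring] at h1 h2
      rcases le_total (C.c (-2)) (C.c (-1)) with hle | hle
      · rw [min_eq_left hle] at h1
        constructor
        · exact h1
        · omega
      · rw [min_eq_right hle] at h1; omega
    -- chord (-2, 1) : gives c 2 < c (-2)
    obtain ⟨e, he, g1, g2, g3⟩ := C.hadj (-2) 1
      (C.mod_ne (by omega) (by omega) (by omega))
      (C.mod_ne (by omega) (by omega) (by omega))
      (C.mod_ne (by omega) (by omega) (by omega)) (by omega)
    have hzz : C.c 2 < C.c (-2) := by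
      rcases hB1 e he with h | h
      · rw [show (1:ℤ)+1 = 2 by ring, min_eq_right hz.2.le] at h; omega
      · rw [show (1:ℤ)+1 = 2 by ring, max_eq_left hz.2.le] at h; omega
    -- chord (2, -1) : gives c (-2) < c 2
    obtain ⟨e', he', g1', g2', g3'⟩ := C.hadj 2 (-1)
      (C.mod_ne (by omega) (by omega) (by omega))
      (C.mod_ne (by omega) (by omega) (by omega))
      (C.mod_ne (by omega) (by omega) (by omega)) (by omega)
    rcases hBm2 e' he' with h | h
    · rw [show (-2:ℤ)+1 = -1 by ring, min_eq_left hz'.2.le] at h; omega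
    · rw [show (-2:ℤ)+1 = -1 by ring, max_eq_right hz'.2.le] at h; omega
  · -- Blocked 1 only : walk from 2 to m-1
    have hz : C.c 2 ≤ C.r - 2 := by
      have h1 := C.blocked_min hB1
      rw [show (1:ℤ)+1 = 2 by ring] at h1
      rcases le_total (C.c 1) (C.c 2) with hle | hle
      · rw [min_eq_left hle] at h1; omega
      · rw [min_eq_right hle] at h1; exact h1
    have hwalk := C.walk 2 (C.m - 3) (fun i hi => by
      have hp : (2 : ℤ) + i ≤ (C.m : ℤ) - 2 := by omega
      rcases eq_or_lt_of_le hp with hpe | hpl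
      · refine ((C.short_or_blocked _).resolve_right ?_)
        intro hblk
        refine hBm2 ((C.blocked_congr (show ((2:ℤ)+i) % (C.m:ℤ) = (-2) % (C.m:ℤ) from ?_)).mp hblk)
        rw [hpe]
        have := Int.add_mul_emod_self_left (a := (-2 : ℤ)) (b := (C.m : ℤ)) (c := 1)
        rw [show (-2 : ℤ) + (C.m : ℤ) * 1 = (C.m : ℤ) - 2 by ring] at this
        exact this
      · exact (C.short_or_blocked _).resolve_right (hB (2 + i) (by omega) (by omega)))
    have e1 : (2 : ℤ) + ((C.m - 3 : ℕ) : ℤ) = (C.m : ℤ) - 1 := by push_cast <;> omega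
    have e2 : ((C.m - 3 : ℕ) : ℤ) = (C.m : ℤ) - 3 := by push_cast <;> omega
    rw [e1, e2, hwrapm1] at hwalk
    rw [abs_of_nonneg (by omega)] at hwalk
    nlinarith
  · -- Blocked (-2) only : walk from 1 to m-2
    have hz' : C.c (-2) ≤ C.r - 2 := by
      have h1 := C.blocked_min hBm2
      rw [show (-2:ℤ)+1 = -1 by ring] at h1
      rcases le_total (C.c (-2)) (C.c (-1)) with hle | hle
      · rw [min_eq_left hle] at h1; exact h1
      · rw [min_eq_right hle] at h1; omega
    have hwalk := C.walk 1 (C.m - 3) (fun i hi => by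
      have hp : (1 : ℤ) + i ≤ (C.m : ℤ) - 3 := by omega
      rcases lt_or_ge (0 : ℕ) i with hi0 | hi0
      · exact (C.short_or_blocked _).resolve_right (hB (1 + i) (by omega) (by omega))
      · have : i = 0 := by omega
        subst this
        refine (C.short_or_blocked _).resolve_right (by simpa using hB1))
    have e1 : (1 : ℤ) + ((C.m - 3 : ℕ) : ℤ) = (C.m : ℤ) - 2 := by push_cast <;> omega
    have e2 : ((C.m - 3 : ℕ) : ℤ) = (C.m : ℤ) - 3 := by push_cast <;> omega
    rw [e1, e2, hwrapm2] at hwalk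
    rw [abs_of_nonpos (by omega)] at hwalk
    nlinarith
  · -- neither : argmin analysis
    have hne : (Finset.Icc (1 : ℤ) ((C.m : ℤ) - 1)).Nonempty := ⟨1, by simp; omega⟩
    obtain ⟨S, hSmem, hS⟩ := Finset.exists_min_image _ C.c hne
    rw [Finset.mem_Icc] at hSmem
    rcases eq_or_lt_of_le hSmem.1 with hS1 | hS2
    · -- S = 1 : c 1 minimal, contra c(m-1) = c(-1) < c 1
      have := hS ((C.m : ℤ) - 1) (Finset.mem_Icc.mpr ⟨by omega, by omega⟩)
      rw [hwrapm1, ← hS1] at this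
      omega
    rcases eq_or_lt_of_le hSmem.2 with hSm | hSm
    · -- S = m-1 : c (-1) minimal, contra c 2 < c (-1)
      have := hS 2 (Finset.mem_Icc.mpr ⟨by omega, by omega⟩)
      rw [hSm, hwrapm1] at this
      have := hA 2 (by omega) (by omega)
      omega
    · -- interior : local min, low, then walk
      have hlm1 : C.c S < C.c (S - 1) := by
        have h1 := hS (S - 1) (Finset.mem_Icc.mpr ⟨by omega, by omega⟩)
        rcases lt_or_eq_of_le h1 with h | h
        · exact h
        · exact absurd h (by
            have := C.val_ne (show S ≠ S - 1 by omega)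
              (by omega) (by omega)
            exact this)
      have hlm2 : C.c S < C.c (S + 1) := by
        have h1 := hS (S + 1) (Finset.mem_Icc.mpr ⟨by omega, by omega⟩)
        rcases lt_or_eq_of_le h1 with h | h
        · exact h
        · exact absurd h (by
            have := C.val_ne (show S ≠ S + 1 by omega)
              (by omega) (by omega)
            exact this)
      have hval := C.valley (S - 1)
        (by rw [show S - 1 + 1 = S by ring]; exact hlm1)
        (by rw [show S - 1 + 2 = S + 1 by ring, show S - 1 + 1 = S by ring]; exact hlm2)
      rw [show S - 1 + 1 = S by ring] at hval
      -- walk from 1 to S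
      have hwalk := C.walk 1 (S - 1).toNat (fun i hi => by
        have hp1 : (1 : ℤ) ≤ 1 + i := by omega
        have hp2 : (1 : ℤ) + i ≤ (C.m : ℤ) - 3 := by omega
        rcases lt_or_ge (0 : ℕ) i with hi0 | hi0
        · exact (C.short_or_blocked _).resolve_right (hB (1 + i) (by omega) (by omega))
        · have : i = 0 := by omega
          subst this
          refine (C.short_or_blocked _).resolve_right (by simpa using hB1))
      have e1 : (1 : ℤ) + ((S - 1).toNat : ℤ) = S := by omega
      have e2 : (((S - 1).toNat : ℤ)) = S - 1 := by omega
      rw [e1, e2] at hwalk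
      rw [abs_of_nonpos (by omega)] at hwalk
      nlinarith


/-- Two consecutive blocked edges sharing a LOW vertex lead to a contradiction. -/
lemma sharedLowAny (t : ℤ) (h1 : C.Blocked t) (h2 : C.Blocked (t + 1))
    (hlow : C.c (t + 1) ≤ C.r - 2) : False := by
  have hm5 := C.hm'
  set C' := C.shift (t + 1) with hC'
  have hbm1' : C'.Blocked (-1) := by
    rw [hC', C.shift_blocked, show (-1 : ℤ) + (t + 1) = t by ring]
    exact h1
  have hb0' : C'.Blocked 0 := by
    rw [hC', C.shift_blocked, zero_add]
    exact h2
  have hlow' : C'.c 0 ≤ C'.r - 2 := by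
    rw [hC', C.shift_c, zero_add]
    exact hlow
  have hm'' : (C'.m : ℤ) = (C.m : ℤ) := rfl
  have hne : C'.c (-1) ≠ C'.c 1 := C'.val_ne (by omega) (by rw [hm'']; omega) (by rw [hm'']; omega)
  rcases lt_or_gt_of_ne hne with hlt | hgt
  · exact C'.sharedLowCase hbm1' hb0' hlow' hlt
  · set C'' := C'.rev 0 with hC''
    have hbm1'' : C''.Blocked (-1) := by
      rw [hC'', C'.rev_blocked, show (0 : ℤ) - (-1) - 1 = 0 by ring]
      exact hb0'
    have hb0'' : C''.Blocked 0 := by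
      rw [hC'', C'.rev_blocked, show (0 : ℤ) - 0 - 1 = -1 by ring]
      exact hbm1'
    have hlow'' : C''.c 0 ≤ C''.r - 2 := by
      rw [hC'', C'.rev_c, show (0 : ℤ) - 0 = 0 by ring]
      exact hlow'
    have hord'' : C''.c (-1) < C''.c 1 := by
      rw [hC'', C'.rev_c, C'.rev_c, show (0 : ℤ) - -1 = 1 by ring, show (0 : ℤ) - 1 = -1 by ring]
      exact hgt
    exact C''.sharedLowCase hbm1'' hb0'' hlow'' hord''

/-- The master contradiction: no configuration exists. -/
lemma noHole (C : Cfg) : False := by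
  have hm5 := C.hm'
  have hr2 := C.hr2
  have hnr := C.nr3
  by_cases hcons : ∃ t : ℤ, C.Blocked t ∧ C.Blocked (t + 1)
  · obtain ⟨t, hbt, hbt1⟩ := hcons
    have hne : C.c t ≠ C.c (t + 1) := C.val_ne (by omega) (by omega) (by omega)
    rcases lt_or_gt_of_ne hne with hlt | hgt
    · -- c (t+1) is the max of edge t : shared high, use reflection
      have hhigh : C.n - C.r + 3 ≤ C.c (t + 1) := by
        have := C.blocked_max hbt
        rwa [max_eq_right hlt.le] at this
      set C' := C.reflect with hC'
      have hbt' : C'.Blocked t := (C.reflect_blocked t).mpr hbt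
      have hbt1' : C'.Blocked (t + 1) := (C.reflect_blocked (t + 1)).mpr hbt1
      have hlow' : C'.c (t + 1) ≤ C'.r - 2 := by
        rw [hC', C.reflect_c]
        show C.n + 1 - C.c (t + 1) ≤ C.r - 2
        omega
      exact C'.sharedLowAny t hbt' hbt1' hlow'
    · -- c (t+1) is the min of edge t : shared low
      have hlow : C.c (t + 1) ≤ C.r - 2 := by
        have := C.blocked_min hbt
        rwa [min_eq_right hgt.le] at this
      exact C.sharedLowAny t hbt hbt1 hlow
  · push_neg at hcons
    by_cases hex : ∃ q : ℤ, C.Blocked q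
    · obtain ⟨q0, hq0⟩ := hex
      set C' := C.shift q0 with hC'
      have hb0' : C'.Blocked 0 := by
        rw [hC', C.shift_blocked, zero_add]
        exact hq0
      have hm'' : (C'.m : ℤ) = (C.m : ℤ) := rfl
      by_cases h2 : ∃ q : ℤ, C.Blocked q ∧ q % (C.m : ℤ) ≠ q0 % (C.m : ℤ)
      · -- at least two blocked edges : pairCase
        obtain ⟨q', hq', hqne⟩ := h2
        have hbq' : C'.Blocked (q' - q0) := by
          rw [hC', C.shift_blocked, show q' - q0 + q0 = q' by ring]
          exact hq'
        have hnc' : ∀ s : ℤ, ¬ (C'.Blocked s ∧ C'.Blocked (s + 1)) := by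
          intro s hs
          rw [hC', C.shift_blocked, C.shift_blocked] at hs
          exact hcons (s + q0) hs.1 (by
            rw [show s + q0 + 1 = s + 1 + q0 by ring]
            exact hs.2)
        refine C'.pairCase (q' - q0) hb0' hbq' ?_ ?_ ?_ hnc'
        · rw [hm'']
          intro h
          apply hqne
          have := Int.ModEq.add_right q0 (show q' - q0 ≡ 0 [ZMOD (C.m : ℤ)] from h)
          rw [show q' - q0 + q0 = q' by ring, zero_add] at this
          exact this
        · rw [hm'']
          intro h
          have hmq : q' % (C.m : ℤ) = (q0 + 1) % (C.m : ℤ) := by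
            have := Int.ModEq.add_right q0 (show q' - q0 ≡ 1 [ZMOD (C.m : ℤ)] from h)
            rw [show q' - q0 + q0 = q' by ring, show (1 : ℤ) + q0 = q0 + 1 by ring] at this
            exact this
          exact hcons q0 hq0 ((C.blocked_congr hmq).mp hq')
        · rw [hm'']
          intro h
          have hmq : q' % (C.m : ℤ) = (q0 - 1) % (C.m : ℤ) := by
            have := Int.ModEq.add_right q0 (show q' - q0 ≡ -1 [ZMOD (C.m : ℤ)] from h)
            rw [show q' - q0 + q0 = q' by ring, show (-1 : ℤ) + q0 = q0 - 1 by ring] at this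
            exact this
          refine hcons (q0 - 1) ((C.blocked_congr hmq).mp hq') ?_
          rw [show q0 - 1 + 1 = q0 by ring]
          exact hq0
      · -- unique blocked edge : singleCase
        push_neg at h2
        have huniq' : ∀ q : ℤ, q % (C'.m : ℤ) ≠ 0 % (C'.m : ℤ) → ¬ C'.Blocked q := by
          intro q hq hbq
          rw [hC', C.shift_blocked] at hbq
          have := h2 (q + q0) hbq
          apply hq
          rw [hm'']
          have := Int.ModEq.add_right (-q0) (show q + q0 ≡ q0 [ZMOD (C.m : ℤ)] from this)
          rw [show q + q0 + -q0 = q by ring, show q0 + -q0 = (0 : ℤ) by ring] at this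
          exact this
        have hne : C'.c 0 ≠ C'.c 1 :=
          C'.val_ne (by omega) (by rw [hm'']; omega) (by rw [hm'']; omega)
        rcases lt_or_gt_of_ne hne with hlt | hgt
        · exact C'.singleCase hb0' huniq' hlt
        · set C'' := C'.rev 1 with hC''
          have hb0'' : C''.Blocked 0 := by
            rw [hC'', C'.rev_blocked, show (1 : ℤ) - 0 - 1 = 0 by ring]
            exact hb0'
          have huniq'' : ∀ q : ℤ, q % (C''.m : ℤ) ≠ 0 % (C''.m : ℤ) → ¬ C''.Blocked q := by
            intro q hq hbq
            rw [hC'', C'.rev_blocked] at hbq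
            refine huniq' (1 - q - 1) ?_ hbq
            intro hh
            apply hq
            show q % (C'.m : ℤ) = 0 % (C'.m : ℤ)
            have := (show (1 : ℤ) - q - 1 ≡ 0 [ZMOD (C'.m : ℤ)] from hh).neg
            rw [show -((1 : ℤ) - q - 1) = q by ring, neg_zero] at this
            exact this
          have hord'' : C''.c 0 < C''.c 1 := by
            rw [hC'', C'.rev_c, C'.rev_c, show (1 : ℤ) - 0 = 1 by ring,
              show (1 : ℤ) - 1 = 0 by ring]
            exact hgt
          exact C''.singleCase hb0'' huniq'' hord''
    · push_neg at hex
      exact C.noBlockedCase hex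

end Cfg
end S7



/-- for `m ≥ 5` and `n ≥ m·r`, the graph `G_n` contains no
induced anticycle of length `m`. -/
theorem stmt7 (r : ℤ) (hr : 1 ≤ r) (E : Set (ℤ × ℤ)) (hE : E.Nonempty)
    (hEr : ∀ e ∈ E, 1 ≤ e.1 ∧ e.1 < e.2 ∧ e.2 ≤ r)
    (m : ℕ) (hm : 5 ≤ m) (n : ℤ) (hn : (m : ℤ) * r ≤ n) :
    ∀ a : ℕ → ℤ, ¬ IsInducedAnticycle (adjGraph r n E) m a := by
  intro a ha
  obtain ⟨hdst, hnon, hadj⟩ := ha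
  have hm0 : (0 : ℤ) < (m : ℤ) := by exact_mod_cast (by omega : 0 < m)
  -- basic facts about the index map
  have hmod1 : ∀ t : ℤ, 0 ≤ t % (m : ℤ) := fun t => Int.emod_nonneg t (by omega)
  have hmod2 : ∀ t : ℤ, t % (m : ℤ) < (m : ℤ) := fun t => Int.emod_lt_of_pos t hm0
  have hlt : ∀ t : ℤ, (t % (m : ℤ)).toNat < m := by
    intro t
    have h1 := hmod1 t
    have h2 := hmod2 t
    omega
  have key : ∀ t : ℤ, (((t + 1) % (m : ℤ)).toNat) = (((t % (m : ℤ)).toNat) + 1) % m := by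
    intro t
    have h1 := hmod1 t
    have h2 := hmod2 t
    have he : (t + 1) % (m : ℤ) = (t % (m : ℤ) + 1) % (m : ℤ) := by
      have hmm : t ≡ t % (m : ℤ) [ZMOD (m : ℤ)] := (Int.emod_emod_of_dvd t dvd_rfl).symm
      exact hmm.add_right 1
    rcases lt_or_eq_of_le (show t % (m : ℤ) + 1 ≤ (m : ℤ) by omega) with hc | hc
    · have hL : (t + 1) % (m : ℤ) = t % (m : ℤ) + 1 := by
        rw [he]
        exact Int.emod_eq_of_lt (by omega) hc
      have hR : ((t % (m : ℤ)).toNat + 1) % m = (t % (m : ℤ)).toNat + 1 :=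
        Nat.mod_eq_of_lt (by omega)
      rw [hL, hR]
      omega
    · have hL : (t + 1) % (m : ℤ) = 0 := by
        rw [he, hc]
        exact Int.emod_self
      have hR : ((t % (m : ℤ)).toNat + 1) % m = 0 := by
        have : (t % (m : ℤ)).toNat + 1 = m := by omega
        rw [this, Nat.mod_self]
      rw [hL, hR]
      rfl
  have hinj : ∀ s t : ℤ, (s % (m : ℤ)).toNat = (t % (m : ℤ)).toNat → s % (m : ℤ) = t % (m : ℤ) := by
    intro s t h
    have h1 := hmod1 s
    have h2 := hmod1 t
    omega
  set c : ℤ → ℤ := fun t => a ((t % (m : ℤ)).toNat) with hc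
  -- build the configuration
  refine S7.Cfg.noHole
    { r := r, n := n, m := m, E := E, c := c
      hE := hE, hEr := hEr, hm := hm, hn := hn
      hcong := ?_, hdist := ?_, hnonlt := ?_, hnongt := ?_, hadj := ?_ }
  · intro s t h
    simp only [hc, h]
  · intro s t h
    by_contra hne
    exact hdst _ (hlt s) _ (hlt t) (fun hEq => hne (hinj s t hEq)) h
  · intro t hlt1 hP
    have h2 := hnon ((t % (m : ℤ)).toNat) (hlt t)
    apply h2
    have hv : a (((t % (m : ℤ)).toNat + 1) % m) = c (t + 1) := by
      rw [hc]
      simp only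
      rw [key t]
    rw [hv]
    exact Or.inl ⟨hlt1, hP⟩
  · intro t hlt1 hP
    have h2 := hnon ((t % (m : ℤ)).toNat) (hlt t)
    apply h2
    have hv : a (((t % (m : ℤ)).toNat + 1) % m) = c (t + 1) := by
      rw [hc]
      simp only
      rw [key t]
    rw [hv]
    exact Or.inr ⟨hlt1, hP⟩
  · intro s t h1 h2 h3 hlt1
    have hne1 : (s % (m : ℤ)).toNat ≠ (t % (m : ℤ)).toNat := fun hEq => h1 (hinj s t hEq)
    have hne2 : ((s % (m : ℤ)).toNat + 1) % m ≠ (t % (m : ℤ)).toNat := by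
      intro hEq
      apply h2
      apply hinj
      rw [key s]
      exact hEq
    have hne3 : ((t % (m : ℤ)).toNat + 1) % m ≠ (s % (m : ℤ)).toNat := by
      intro hEq
      apply h3
      apply hinj
      rw [key t]
      exact hEq
    have hAdj := hadj _ (hlt s) _ (hlt t) hne1 hne2 hne3
    rcases hAdj with ⟨_, hP⟩ | ⟨hgt, _⟩
    · exact hP
    · exact absurd hlt1 (by exact not_lt.mpr hgt.le)
end

section
/- With G_n as in the context: let n ≥ 3r and m ≥ 5 be integers, and suppose pairwise distinct vertices a_1, …, a_m of G_n form an induced anticycle of length m in this cyclic order, with a_1 = min{a_1, …, a_m}. Then max{a_1, a_2, …, a_m} = max{a_2, a_m}. -/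
lemma adjGraph_symm {r n : ℤ} {E : Set (ℤ × ℤ)} {u v : ℤ}
    (h : adjGraph r n E u v) : adjGraph r n E v u :=
  h.elim Or.inr Or.inl

/-- The key "engine" lemma.  Here `o` is the minimal vertex, `T` the maximal
vertex, `(i,j)` a witness pair for the adjacency of `o` and `T`, and `R` a
reference vertex (one of the two cycle-neighbours of `o`) which is not
adjacent to `o`.  If `v` lies strictly between `o` and `R`, is adjacent to
`R`, and `w > v` is not adjacent to `v` (with `w ≤ T`), then `w < R`. -/
lemma engine (r n : ℤ) (E : Set (ℤ × ℤ))
    (hEr : ∀ e ∈ E, 1 ≤ e.1 ∧ e.1 < e.2 ∧ e.2 ≤ r)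
    (hn : 3 * r ≤ n)
    (o R v w T i j : ℤ) (hij : (i, j) ∈ E)
    (hio : i ≤ o) (hjT : T - j ≤ n - r)
    (hoR : ¬ adjGraph r n E o R) (hRT : R ≤ T)
    (hov : o < v) (hvR : v < R) (hAvR : adjGraph r n E v R)
    (hvw : v < w) (hwT : w ≤ T) (hnvw : ¬ adjGraph r n E v w) : w < R := by
  obtain ⟨hi1, hij2, hjr⟩ := hEr (i, j) hij
  rcases hAvR with ⟨-, e, heE, h1, h2, h3⟩ | ⟨hlt, -⟩
  · obtain ⟨he1, he2, he3⟩ := hEr e heE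
    -- the witness left entry exceeds o, otherwise o would be adjacent to R
    have hγo : o < e.1 := by
      by_contra hcon
      push_neg at hcon
      exact hoR (Or.inl ⟨by linarith, ⟨e, heE, hcon, by linarith, h3⟩⟩)
    -- gap bound for the non-adjacent pair (o, R)
    have hgapOR : R - o ≤ j - i - 1 := by
      by_contra hcon
      push_neg at hcon
      exact hoR (Or.inl ⟨by linarith, ⟨(i, j), hij, hio, by linarith, by linarith⟩⟩)
    by_cases hcase : w - e.2 ≤ n - r
    · -- then the middle condition must fail, giving w < R
      have hmid : ¬ (v - e.1 ≤ w - e.2) := by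
        intro hc
        exact hnvw (Or.inl ⟨hvw, ⟨e, heE, h1, hc, hcase⟩⟩)
      push_neg at hmid
      linarith
    · -- w is huge; combined with the gap bounds this contradicts n ≥ 3r
      push_neg at hcase
      have hgapVW : w - v ≤ j - i - 1 := by
        by_contra hcon
        push_neg at hcon
        exact hnvw (Or.inl ⟨hvw, ⟨(i, j), hij, by linarith, by linarith, by linarith⟩⟩)
      linarith
  · linarith

/-- if `n ≥ 3r`, `m ≥ 5`, the vertices `a 0, …, a (m-1)` form an
induced anticycle of `G_n` in this cyclic order and `a 0` is the least of
them, then the greatest of them is `max (a 1) (a (m-1))` (in the paper's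
1-based notation: `max{a_1,…,a_m} = max{a_2, a_m}`). -/
theorem stmt8 (r : ℤ) (hr : 1 ≤ r) (E : Set (ℤ × ℤ)) (hE : E.Nonempty)
    (hEr : ∀ e ∈ E, 1 ≤ e.1 ∧ e.1 < e.2 ∧ e.2 ≤ r)
    (n : ℤ) (hn : 3 * r ≤ n) (m : ℕ) (hm : 5 ≤ m) (a : ℕ → ℤ)
    (hcyc : IsInducedAnticycle (adjGraph r n E) m a)
    (hmin : ∀ t, t < m → a 0 ≤ a t) :
    IsGreatest (a '' Set.Iio m) (max (a 1) (a (m - 1))) := by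
  obtain ⟨hdist, hcons, hadj⟩ := hcyc
  have h1m : 1 < m := by omega
  have hm1 : m - 1 < m := by omega
  -- the upper bound property
  have key : ∀ t, t < m → a t ≤ max (a 1) (a (m - 1)) := by
    by_contra hk
    push_neg at hk
    obtain ⟨t0, ht0, hgt0⟩ := hk
    -- pick an index realizing the maximum
    obtain ⟨s, hsmem, hsmax'⟩ :=
      Finset.exists_max_image (Finset.range m) a ⟨0, Finset.mem_range.mpr (by omega)⟩
    have hsm : s < m := Finset.mem_range.mp hsmem
    have hsmax : ∀ t, t < m → a t ≤ a s := fun t ht =>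
      hsmax' t (Finset.mem_range.mpr ht)
    have hbig : max (a 1) (a (m - 1)) < a s := lt_of_lt_of_le hgt0 (hsmax t0 ht0)
    have h1s : a 1 < a s := lt_of_le_of_lt (le_max_left _ _) hbig
    have hm1s : a (m - 1) < a s := lt_of_le_of_lt (le_max_right _ _) hbig
    -- strict min and strict max
    have hminlt : ∀ t, t < m → t ≠ 0 → a 0 < a t := fun t ht htn =>
      lt_of_le_of_ne (hmin t ht) (hdist 0 (by omega) t ht (fun h => htn h.symm))
    have hmaxlt : ∀ t, t < m → t ≠ s → a t < a s := fun t ht htn =>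
      lt_of_le_of_ne (hsmax t ht) (hdist t ht s hsm htn)
    have hs0 : s ≠ 0 := by
      intro h; subst h; exact absurd (hmin 1 h1m) (not_le.mpr h1s)
    have hs1 : s ≠ 1 := fun h => by rw [h] at h1s; exact lt_irrefl _ h1s
    have hsm1 : s ≠ m - 1 := fun h => by rw [h] at hm1s; exact lt_irrefl _ hm1s
    have hs2 : 2 ≤ s := by omega
    have hsm2 : s ≤ m - 2 := by omega
    -- adjacency of a 0 and a s, giving the witness pair (i, j)
    have hA0s : adjGraph r n E (a 0) (a s) := by
      refine hadj 0 (by omega) s hsm (fun h => hs0 h.symm) ?_ ?_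
      · rw [Nat.mod_eq_of_lt (by omega : 0 + 1 < m)]; omega
      · rw [Nat.mod_eq_of_lt (by omega : s + 1 < m)]; omega
    obtain ⟨-, e0, he0E, hie, -, hjT⟩ | ⟨hlt, -⟩ := hA0s
    swap
    · exact absurd hlt (not_lt.mpr (le_of_lt (hminlt s hsm hs0)))
    -- non-adjacency of a 0 with a 1 and with a (m-1)
    have hne01 : ¬ adjGraph r n E (a 0) (a 1) := by
      have := hcons 0 (by omega)
      rwa [Nat.mod_eq_of_lt (by omega : 0 + 1 < m)] at this
    have hne0m : ¬ adjGraph r n E (a 0) (a (m - 1)) := by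
      have h := hcons (m - 1) hm1
      rw [(by omega : m - 1 + 1 = m), Nat.mod_self] at h
      exact fun hc => h (adjGraph_symm hc)
    -- the two symmetric cases, according to the order of a 1 and a (m-1)
    rcases lt_or_gt_of_ne (hdist (m - 1) hm1 1 h1m (by omega)) with hB | hA
    · -- CASE B : a (m-1) < a 1 ; walk the arc m-1, m-2, …, s+1 downwards
      have claimB : ∀ k, k ≤ m - s - 2 → a (m - 1 - k) < a 1 := by
        intro k
        induction k with
        | zero => intro _; simpa using hB
        | succ k ih =>
          intro hk
          have hprev : a (m - 1 - k) < a 1 := ih (by omega)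
          set t := m - 1 - k with htdef
          have hts : s + 2 ≤ t := by omega
          have htm : t ≤ m - 1 := by omega
          have ht1 : m - 1 - (k + 1) = t - 1 := by omega
          rw [ht1]
          rcases lt_trichotomy (a (t - 1)) (a t) with h | h | h
          · linarith
          · exact absurd h (hdist (t - 1) (by omega) t (by omega) (by omega))
          · -- engine step
            have hAt1 : adjGraph r n E (a t) (a 1) := by
              refine hadj t (by omega) 1 h1m (by omega) ?_ ?_
              · rcases Nat.eq_or_lt_of_le htm with he | hlt2
                · rw [he, (by omega : m - 1 + 1 = m), Nat.mod_self]; omega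
                · rw [Nat.mod_eq_of_lt (by omega)]; omega
              · rw [Nat.mod_eq_of_lt (by omega : 1 + 1 < m)]; omega
            have hnvw : ¬ adjGraph r n E (a t) (a (t - 1)) := by
              have hc := hcons (t - 1) (by omega)
              rw [(by omega : t - 1 + 1 = t), Nat.mod_eq_of_lt (by omega : t < m)] at hc
              exact fun hadj' => hc (adjGraph_symm hadj')
            exact engine r n E hEr hn (a 0) (a 1) (a t) (a (t - 1)) (a s)
              e0.1 e0.2 (by simpa using he0E) hie hjT hne01 (hsmax 1 h1m)
              (hminlt t (by omega) (by omega)) hprev hAt1 h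
              (hsmax (t - 1) (by omega)) hnvw
      -- terminal step : a (s+1) < a 1, then the engine applied to (a (s+1), a s)
      have hfin : a (s + 1) < a 1 := by
        have h := claimB (m - s - 2) le_rfl
        rwa [(by omega : m - 1 - (m - s - 2) = s + 1)] at h
      have hAs1 : adjGraph r n E (a (s + 1)) (a 1) := by
        refine hadj (s + 1) (by omega) 1 h1m (by omega) ?_ ?_
        · rcases Nat.eq_or_lt_of_le (by omega : s + 1 ≤ m - 1) with he | hlt2
          · rw [he, (by omega : m - 1 + 1 = m), Nat.mod_self]; omega
          · rw [Nat.mod_eq_of_lt (by omega)]; omega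
        · rw [Nat.mod_eq_of_lt (by omega : 1 + 1 < m)]; omega
      have hnvw : ¬ adjGraph r n E (a (s + 1)) (a s) := by
        have hc := hcons s hsm
        rw [Nat.mod_eq_of_lt (by omega : s + 1 < m)] at hc
        exact fun hadj' => hc (adjGraph_symm hadj')
      have := engine r n E hEr hn (a 0) (a 1) (a (s + 1)) (a s) (a s)
        e0.1 e0.2 (by simpa using he0E) hie hjT hne01 (hsmax 1 h1m)
        (hminlt (s + 1) (by omega) (by omega)) hfin hAs1
        (hmaxlt (s + 1) (by omega) (by omega)) le_rfl hnvw
      linarith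
    · -- CASE A : a 1 < a (m-1) ; walk the arc 1, 2, …, s-1 upwards
      have hA' : a 1 < a (m - 1) := hA
      have claimA : ∀ k, k ≤ s - 2 → a (1 + k) < a (m - 1) := by
        intro k
        induction k with
        | zero => intro _; simpa using hA'
        | succ k ih =>
          intro hk
          have hprev : a (1 + k) < a (m - 1) := ih (by omega)
          set t := 1 + k with htdef
          have hts : t ≤ s - 2 := by omega
          have ht1 : 1 + (k + 1) = t + 1 := by omega
          rw [ht1]
          rcases lt_trichotomy (a (t + 1)) (a t) with h | h | h
          · linarith
          · exact absurd h (hdist (t + 1) (by omega) t (by omega) (by omega))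
          · -- engine step
            have hAt1 : adjGraph r n E (a t) (a (m - 1)) := by
              refine hadj t (by omega) (m - 1) hm1 (by omega) ?_ ?_
              · rw [Nat.mod_eq_of_lt (by omega : t + 1 < m)]; omega
              · rw [(by omega : m - 1 + 1 = m), Nat.mod_self]; omega
            have hnvw : ¬ adjGraph r n E (a t) (a (t + 1)) := by
              have hc := hcons t (by omega)
              rwa [Nat.mod_eq_of_lt (by omega : t + 1 < m)] at hc
            exact engine r n E hEr hn (a 0) (a (m - 1)) (a t) (a (t + 1)) (a s)
              e0.1 e0.2 (by simpa using he0E) hie hjT hne0m (hsmax (m - 1) hm1)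
              (hminlt t (by omega) (by omega)) hprev hAt1 h
              (hsmax (t + 1) (by omega)) hnvw
      -- terminal step : a (s-1) < a (m-1), then the engine applied to (a (s-1), a s)
      have hfin : a (s - 1) < a (m - 1) := by
        have h := claimA (s - 2) le_rfl
        rwa [(by omega : 1 + (s - 2) = s - 1)] at h
      have hAs1 : adjGraph r n E (a (s - 1)) (a (m - 1)) := by
        refine hadj (s - 1) (by omega) (m - 1) hm1 (by omega) ?_ ?_
        · rw [Nat.mod_eq_of_lt (by omega : s - 1 + 1 < m)]; omega
        · rw [(by omega : m - 1 + 1 = m), Nat.mod_self]; omega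
      have hnvw : ¬ adjGraph r n E (a (s - 1)) (a s) := by
        have hc := hcons (s - 1) (by omega)
        rwa [(by omega : s - 1 + 1 = s), Nat.mod_eq_of_lt (by omega : s < m)] at hc
      have := engine r n E hEr hn (a 0) (a (m - 1)) (a (s - 1)) (a s) (a s)
        e0.1 e0.2 (by simpa using he0E) hie hjT hne0m (hsmax (m - 1) hm1)
        (hminlt (s - 1) (by omega) (by omega)) hfin hAs1
        (hmaxlt (s - 1) (by omega) (by omega)) le_rfl hnvw
      linarith
  constructor
  · rcases max_cases (a 1) (a (m - 1)) with ⟨heq, -⟩ | ⟨heq, -⟩ <;> rw [heq]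
    · exact ⟨1, Set.mem_Iio.mpr h1m, rfl⟩
    · exact ⟨m - 1, Set.mem_Iio.mpr hm1, rfl⟩
  · rintro y ⟨t, ht, rfl⟩
    exact key t (Set.mem_Iio.mp ht)
end
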